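/- arXiv:1111.3316 — 5 statements merged into one kernel-verified Lean document; each statement's English description precedes it below -/
import Mathlib

section
/- Let M be an integral (cancellative) commutative monoid and P' ⊆ M a submonoid. Let h : Q → M be a monoid homomorphism from an integral monoid Q satisfying the integrality condition: whenever q₁, q₂ ∈ Q and a₁, a₂ ∈ M satisfy h(q₁)a₁ = h(q₂)a₂, there exist q₃, q₄ ∈ Q and a ∈ M with a₁ = h(q₃)a, a₂ = h(q₄)a, and q₁q₃ = q₂q₄. Then the induced homomorphism between the integral monoid quotients Q/h⁻¹(P') → M/P' satisfies the same condition. -/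
/-!
STATEMENT 0 (Kato's integrality criterion, condition (iv), passes to integral
monoid quotients).

For a commutative monoid `M`, "integral" means cancellative (the canonical map to the
group completion is injective).  For a submonoid `P' ⊆ M`, the integral monoid quotient
`M/P'` (the image of `M` in `M^gp/(P')^gp`) is the quotient of `M` by the congruence
`x ~ y ↔ ∃ p p' ∈ P', x * p = y * p'`.
-/

/-- Condition (iv) of Kato's criterion for a monoid homomorphism `h : Q → M`. -/
def KatoCondIV {Q M : Type*} [CommMonoid Q] [CommMonoid M] (h : Q →* M) : Prop :=
  ∀ q₁ q₂ : Q, ∀ a₁ a₂ : M, h q₁ * a₁ = h q₂ * a₂ →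
    ∃ q₃ q₄ : Q, ∃ a : M, a₁ = h q₃ * a ∧ a₂ = h q₄ * a ∧ q₁ * q₃ = q₂ * q₄

/-- The congruence on `M` whose quotient is the integral monoid quotient `M/P'`
(for `M` cancellative this is the image of `M` in `M^gp/(P')^gp`). -/
def quotIntCon (M : Type*) [CommMonoid M] (P : Submonoid M) : Con M where
  r x y := ∃ p ∈ P, ∃ p' ∈ P, x * p = y * p'
  iseqv := by
    constructor
    · exact fun x => ⟨1, P.one_mem, 1, P.one_mem, rfl⟩
    · rintro x y ⟨p, hp, p', hp', e⟩; exact ⟨p', hp', p, hp, e.symm⟩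
    · rintro x y z ⟨p, hp, p', hp', e⟩ ⟨q, hq, q', hq', e'⟩
      refine ⟨p * q, P.mul_mem hp hq, q' * p', P.mul_mem hq' hp', ?_⟩
      calc x * (p * q) = (x * p) * q := by rw [mul_assoc]
        _ = (y * p') * q := by rw [e]
        _ = (y * q) * p' := by rw [mul_assoc, mul_comm p' q, ← mul_assoc]
        _ = (z * q') * p' := by rw [e']
        _ = z * (q' * p') := by rw [mul_assoc]
  mul' := by
    rintro w x y z ⟨p, hp, p', hp', e⟩ ⟨q, hq, q', hq', e'⟩
    refine ⟨p * q, P.mul_mem hp hq, p' * q', P.mul_mem hp' hq', ?_⟩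
    calc w * y * (p * q) = (w * p) * (y * q) := mul_mul_mul_comm w y p q
      _ = (x * p') * (z * q') := by rw [e, e']
      _ = x * z * (p' * q') := (mul_mul_mul_comm x z p' q').symm

/-- The homomorphism `Q/h⁻¹(P') → M/P'` induced by `h : Q → M`. -/
def inducedQuotHom {Q M : Type*} [CommMonoid Q] [CommMonoid M] (h : Q →* M)
    (P : Submonoid M) :
    (quotIntCon Q (P.comap h)).Quotient →* (quotIntCon M P).Quotient :=
  Con.lift _ ((quotIntCon M P).mk'.comp h) (by
    rintro x y ⟨p, hp, p', hp', e⟩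
    have hr : (quotIntCon M P) (h x) (h y) :=
      ⟨h p, hp, h p', hp', by rw [← map_mul, ← map_mul, e]⟩
    simpa [Con.ker_rel] using ((quotIntCon M P).eq.mpr hr))

section quotIntCon

variable {Q M : Type*} [CommMonoid Q] [CommMonoid M]

theorem quotIntCon_mk'_mul_of_mem {P : Submonoid M} (x : M) {p : M} (hp : p ∈ P) :
    (quotIntCon M P).mk' (x * p) = (quotIntCon M P).mk' x :=
  (quotIntCon M P).eq.mpr ⟨1, P.one_mem, p, hp, by rw [mul_one]⟩

@[simp]
theorem inducedQuotHom_mk' (h : Q →* M) (P : Submonoid M) (q : Q) :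
    inducedQuotHom h P ((quotIntCon Q (P.comap h)).mk' q) = (quotIntCon M P).mk' (h q) :=
  rfl

end quotIntCon

/-- If `M` and `Q` are integral (cancellative) commutative monoids, `P' ⊆ M` a submonoid,
and `h : Q → M` satisfies Kato's condition (iv), then the induced homomorphism between
the integral monoid quotients `Q/h⁻¹(P') → M/P'` satisfies the same condition. -/
theorem katoCondIV_quotient {Q M : Type*} [CancelCommMonoid Q] [CancelCommMonoid M]
    (P' : Submonoid M) (h : Q →* M) (hKato : KatoCondIV h) :
    KatoCondIV (inducedQuotHom h P') := by
  intro q₁' q₂' a₁' a₂' he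
  obtain ⟨q₁, rfl⟩ := Con.mk'_surjective q₁'
  obtain ⟨q₂, rfl⟩ := Con.mk'_surjective q₂'
  obtain ⟨a₁, rfl⟩ := Con.mk'_surjective a₁'
  obtain ⟨a₂, rfl⟩ := Con.mk'_surjective a₂'
  simp only [inducedQuotHom_mk', ← map_mul] at he
  -- Absorb the witnesses of `h q₁ * a₁ ~ h q₂ * a₂` into the `M`-components and apply `hKato` upstairs.
  obtain ⟨p, hp, p', hp', e⟩ := (quotIntCon M P').eq.mp he
  obtain ⟨q₃, q₄, a, e₁, e₂, e₃⟩ :=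
    hKato q₁ q₂ (a₁ * p) (a₂ * p') (by rw [← mul_assoc, ← mul_assoc, e])
  refine ⟨(quotIntCon Q (P'.comap h)).mk' q₃, (quotIntCon Q (P'.comap h)).mk' q₄,
    (quotIntCon M P').mk' a, ?_, ?_, by rw [← map_mul, ← map_mul, e₃]⟩
  · rw [inducedQuotHom_mk', ← map_mul, ← e₁, quotIntCon_mk'_mul_of_mem a₁ hp]
  · rw [inducedQuotHom_mk', ← map_mul, ← e₂, quotIntCon_mk'_mul_of_mem a₂ hp']
end

section
/- Let R be a discrete valuation ring of mixed characteristic (0, p) with a ring endomorphism φ_R. Let C be a bounded complex of R_φ-modules which is perfect as a complex of R-modules and nondegenerate (the linearization L φ_R^* C ⊗ ℚ → C ⊗ ℚ is a quasi-isomorphism). Suppose H^a(C) is the top nonvanishing cohomology, and P ↠ H^a(C) is an R-linear surjection from a finitely generated projective R-module. Then there exists a φ_R-semilinear endomorphism φ_P of P lifting the φ-action on H^a(C) such that the R-linear extension φ_R^* P → P becomes an isomorphism after tensoring with ℚ. -/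
/-!
Over the DVR `R` the module `P` is free, say with basis `e`, and a `φR`-semilinear lift is the
choice of images `y i ∈ x i + Q`, where `pr (x i) = φH a (pr (e i))` and `Q = ker pr`.
Nondegeneracy says that the `x i` span `P / Q` up to `p ^ k`, so in `V = K ⊗ P` they span `V / W`
for `W` the `K`-span of `Q`. Pick `S` such that the images of `(x i)_{i ∈ S}` form a basis of `V / W`, and
match the remaining indices with a basis `(g j)` of `W` taken from `Q`. Keeping `x i` for `i ∈ S`
and replacing it by `x i + c • g (σ i)` otherwise gives an independent family unless `-c` is one of
the finitely many eigenvalues of a fixed endomorphism, so some `c ∈ R` works since `R` is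
infinite. Independence of `φP ∘ e` passes to `φP ∘ b` for every basis `b` through the invertible
change-of-basis matrix.
-/

open Submodule Set Function Module
open scoped TensorProduct Matrix

section Perturbation

variable {K V : Type*} [Field K] [AddCommGroup V] [Module K V]

theorem finite_setOf_not_linearIndependent_add_smul {T : Type*} [Finite T] {b : T → V}
    (hb : LinearIndependent K b) (x : T → V) :
    {c : K | ¬ LinearIndependent K (x + c • b)}.Finite := by
  set W := span K (range b)
  have : FiniteDimensional K W := .span_of_finite K (finite_range b)
  let B : Basis T K W := Basis.span hb
  obtain ⟨π, hπ⟩ := LinearMap.exists_leftInverse_of_injective W.subtype (ker_subtype W)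
  let u : Module.End K W := B.constr K (π ∘ x)
  refine (u.finite_hasEigenvalue.preimage neg_injective.injOn).subset fun c hc => ?_
  by_contra hμ
  apply hc
  have hinj : LinearMap.ker (u + c • LinearMap.id) = ⊥ := by
    refine LinearMap.ker_eq_bot'.mpr fun w hw => by_contra fun hw0 => hμ ?_
    refine Module.End.hasEigenvalue_of_hasEigenvector ⟨Module.End.mem_eigenspace_iff.mpr ?_, hw0⟩
    simp only [LinearMap.add_apply, LinearMap.smul_apply, LinearMap.id_apply] at hw
    rw [neg_smul, ← add_eq_zero_iff_eq_neg, hw]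
  have hcomp : ⇑π ∘ (x + c • b) = ⇑(u + c • LinearMap.id : Module.End K W) ∘ ⇑B := by
    funext t
    have hπb : π (b t) = B t := by
      simpa [B, W] using LinearMap.congr_fun hπ (B t)
    simp [u, hπb]
  exact LinearIndependent.of_comp π (hcomp ▸ B.linearIndependent.map' _ hinj)

theorem finite_setOf_not_linearIndependent_sumElim_add_smul {S T : Type*} [Finite T]
    {f : S → V} {b : T → V} (hfb : LinearIndependent K (Sum.elim f b)) (x : T → V) :
    {c : K | ¬ LinearIndependent K (Sum.elim f (x + c • b))}.Finite := by
  set F := span K (range f)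
  obtain ⟨hf, hb, hdisj⟩ := linearIndependent_sum.mp hfb
  have hbF : LinearIndependent K (F.mkQ ∘ b) := hb.map (by simpa [F] using hdisj.symm)
  refine (finite_setOf_not_linearIndependent_add_smul hbF (F.mkQ ∘ x)).subset fun c hc h => hc ?_
  have hfF : LinearIndependent K (fun s => (⟨f s, subset_span ⟨s, rfl⟩⟩ : F)) :=
    .of_comp F.subtype hf
  have hq : F.mkQ ∘ (x + c • b) = F.mkQ ∘ x + c • (F.mkQ ∘ b) := by ext; simp
  exact hfF.sumElim_of_quotient (x + c • b) (hq ▸ h)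

theorem exists_finite_setOf_not_linearIndependent_add_smul [FiniteDimensional K V] {ι : Type*}
    [Finite ι] (x : ι → V) (L : Set V) (hx : span K (range x) ⊔ span K L = ⊤)
    (hcard : Nat.card ι = finrank K V) :
    ∃ z : ι → V, (∀ i, z i = 0 ∨ z i ∈ L) ∧
      {c : K | ¬ LinearIndependent K (x + c • z)}.Finite := by
  classical
  set W := span K L
  obtain ⟨t, htL, htW, ht⟩ := exists_linearIndependent K L
  obtain ⟨S, -, -, hSspan, hS⟩ := exists_linearIndepOn_extension (v := W.mkQ ∘ x)
    (linearIndepOn_empty K _) (empty_subset univ)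
  have hspanS : span K ((W.mkQ ∘ x) '' S) = ⊤ := by
    refine eq_top_iff.mpr ?_
    rw [← (map_mkQ_eq_top W _).mpr (by rwa [sup_comm]), map_span, ← range_comp, ← image_univ]
    exact span_le.mpr hSspan
  have hcardS : Nat.card S = finrank K (V ⧸ W) :=
    (finrank_eq_nat_card_basis (Basis.mk hS (by rw [← image_eq_range]; exact hspanS.ge))).symm
  have hcardt : Nat.card t = finrank K W := by
    have := finrank_eq_nat_card_basis (Basis.span ht)
    rw [Subtype.range_coe, htW] at this
    exact this.symm
  have : Finite t := ht.finite_of_isNoetherian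
  obtain ⟨σ⟩ : Nonempty (↥Sᶜ ≃ t) := by
    rw [← Finite.card_eq]
    have := W.finrank_quotient_add_finrank
    have := S.ncard_add_ncard_compl
    simp only [Nat.card_coe_set_eq] at *
    omega
  let b : ↥Sᶜ → V := fun i => σ i
  have hxb : LinearIndependent K (Sum.elim (fun i : S => x i) b) := by
    have hσ : LinearIndependent K (fun j => (⟨σ j, htW.le (subset_span (σ j).2)⟩ : W)) :=
      .of_comp W.subtype (ht.comp σ σ.injective)
    have h := hσ.sumElim_of_quotient (fun i : S => x i) hS
    rw [← linearIndependent_equiv (Equiv.sumComm _ _)] at h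
    exact Sum.elim_swap ▸ h
  refine ⟨fun i => if h : i ∈ S then 0 else b ⟨i, h⟩, fun i => ?_, ?_⟩
  · by_cases h : i ∈ S
    · simp [h]
    · simpa [h, b] using Or.inr (htL (σ ⟨i, h⟩).2)
  refine (finite_setOf_not_linearIndependent_sumElim_add_smul hxb (fun i : ↥Sᶜ => x i)).subset
    fun c hc h => hc ?_
  rw [← linearIndependent_equiv (Equiv.Set.sumCompl S)]
  convert h using 1
  funext i
  rcases i with i | i
  · simp [i.2]
  · simp [notMem_of_mem_compl i.2, b]

end Perturbation

section Lattice

variable {R P : Type*} [CommRing R] [IsDomain R] [Infinite R] [AddCommGroup P] [Module R P]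
  [Module.Free R P] [Module.Finite R P]

theorem exists_linearIndependent_sub_mem {ι : Type*} [Finite ι] (hcard : Nat.card ι = finrank R P)
    (Q : Submodule R P) (x : ι → P) {r : R} (hr : r ≠ 0)
    (hrx : ∀ v, r • v ∈ span R (range x) ⊔ Q) :
    ∃ y : ι → P, (∀ i, y i - x i ∈ Q) ∧ LinearIndependent R y := by
  let K := FractionRing R
  let c : P →ₗ[R] K ⊗[R] P := TensorProduct.mk R K P 1
  set N := span K (range (c ∘ x)) ⊔ span K (c '' Q)
  have hcN : ∀ v, c v ∈ N := by
    have hle : span R (range x) ⊔ Q ≤ (N.restrictScalars R).comap c :=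
      sup_le (span_le.mpr (range_subset_iff.mpr fun i => mem_sup_left (subset_span ⟨i, rfl⟩)))
        fun q hq => mem_sup_right (subset_span ⟨q, hq, rfl⟩)
    intro v
    have hr' : algebraMap R K r ≠ 0 := (IsFractionRing.injective R K).ne hr |>.trans_eq (map_zero _)
    have := N.smul_mem (algebraMap R K r)⁻¹ (hle (hrx v))
    rwa [map_smul, ← algebraMap_smul K r, inv_smul_smul₀ hr'] at this
  have hN : N = ⊤ := by
    let e := Module.Free.chooseBasis R P
    rw [eq_top_iff, ← (Algebra.TensorProduct.basis K e).span_eq, span_le]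
    rintro _ ⟨i, rfl⟩
    rw [Algebra.TensorProduct.basis_apply]
    exact hcN (e i)
  have hcardK : Nat.card ι = finrank K (K ⊗[R] P) := by rw [Module.finrank_baseChange, hcard]
  obtain ⟨z, hz, hfin⟩ :=
    exists_finite_setOf_not_linearIndependent_add_smul (c ∘ x) (c '' Q) hN hcardK
  obtain ⟨s, hs⟩ := (hfin.preimage (IsFractionRing.injective R K).injOn).infinite_compl.nonempty
  have hq : ∀ i, ∃ q ∈ Q, c q = z i := fun i => by
    rcases hz i with h | ⟨q, hq, h⟩
    exacts [⟨0, Q.zero_mem, h ▸ map_zero c⟩, ⟨q, hq, h⟩]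
  choose q hqQ hq using hq
  refine ⟨x + s • q, fun i => by simpa using Q.smul_mem s (hqQ i), ?_⟩
  have hcy : c ∘ (x + s • q) = c ∘ x + algebraMap R K s • z := by
    funext i
    simp [← hq, algebraMap_smul]
  exact .of_comp c (hcy ▸ (not_not.mp hs).restrict_scalars' R)

end Lattice

section Semilinear

variable {R S M M₂ : Type*} [CommRing R] [CommRing S] [AddCommGroup M] [Module R M]
  [AddCommGroup M₂] [Module S M₂] {σ : R →+* S}

theorem LinearMap.apply_mem_span_image_of_mem_span (f : M →ₛₗ[σ] M₂) {s : Set M} {m : M}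
    (h : m ∈ span R s) : f m ∈ span S (f '' s) := by
  induction h using span_induction with
  | mem m hm => exact subset_span (mem_image_of_mem f hm)
  | zero => simp
  | add _ _ _ _ h₁ h₂ => simpa using add_mem h₁ h₂
  | smul a _ _ h => simpa using smul_mem _ (σ a) h

theorem smul_mem_span_range_sup_ker {P ι : Type*} [AddCommGroup P] [Module R P]
    {τ : R →+* R} (pr : P →ₗ[R] M) (hpr : Surjective pr) (φ : M →ₛₗ[τ] M) {e : ι → P}
    (he : span R (range e) = ⊤) {x : ι → P} (hx : ∀ i, pr (x i) = φ (pr (e i))) {r : R}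
    (hr : ∀ m, r • m ∈ span R (range φ)) (v : P) :
    r • v ∈ span R (range x) ⊔ LinearMap.ker pr := by
  rw [← comap_map_eq, mem_comap, map_span, ← range_comp, map_smul]
  refine span_le.mpr ?_ (hr (pr v))
  rintro _ ⟨m, rfl⟩
  have hm : m ∈ span R (range (pr ∘ e)) := by
    rw [range_comp, ← map_span, he, Submodule.map_top, LinearMap.range_eq_top.mpr hpr]
    trivial
  have hφx : φ ∘ pr ∘ e = pr ∘ x := funext fun i => (hx i).symm
  simpa [← range_comp, hφx] using φ.apply_mem_span_image_of_mem_span hm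

variable {ι : Type*} [Fintype ι]

noncomputable def Module.Basis.semilinearConstr (b : Basis ι R M) (σ : R →+* S) (v : ι → M₂) :
    M →ₛₗ[σ] M₂ where
  toFun m := ∑ i, σ (b.repr m i) • v i
  map_add' m m' := by simp [add_smul, Finset.sum_add_distrib]
  map_smul' a m := by simp [mul_smul, Finset.smul_sum]

@[simp]
theorem Module.Basis.semilinearConstr_basis (b : Basis ι R M) (σ : R →+* S) (v : ι → M₂) (i : ι) :
    b.semilinearConstr σ v (b i) = v i := by
  classical
  simp [semilinearConstr, Finsupp.single_apply]

theorem LinearIndependent.semilinearMap_comp_basis {ι' : Type*} [Finite ι'] (f : M →ₛₗ[σ] M₂)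
    (e : Basis ι R M) (b : Basis ι' R M) (he : LinearIndependent S (f ∘ e)) :
    LinearIndependent S (f ∘ b) := by
  classical
  have := Fintype.ofFinite ι'
  rw [Fintype.linearIndependent_iff] at he ⊢
  intro g hg
  set A := (e.toMatrix b).map σ
  have hA : (b.toMatrix e).map σ * A = 1 := by
    rw [← Matrix.map_mul, b.toMatrix_mul_toMatrix_flip, Matrix.map_one σ (map_zero σ) (map_one σ)]
  have hfb : ∀ j, f (b j) = ∑ i, A i j • f (e i) := fun j => by
    conv_lhs => rw [← e.sum_repr (b j)]
    simp only [map_sum, map_smulₛₗ, A, Matrix.map_apply, Basis.toMatrix_apply]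
  have hAg : A *ᵥ g = 0 := funext <| he _ <| calc
    ∑ i, (A *ᵥ g) i • f (e i) = ∑ j, g j • ∑ i, A i j • f (e i) := by
      simp only [Matrix.mulVec, dotProduct, Finset.sum_smul, Finset.smul_sum, smul_smul, mul_comm]
      exact Finset.sum_comm
    _ = 0 := by simpa [hfb] using hg
  have hg0 : g = 0 := by
    rw [← Matrix.one_mulVec g, ← hA, ← Matrix.mulVec_mulVec, hAg, Matrix.mulVec_zero]
  exact congrFun hg0

end Semilinear

theorem nondegenerate_lift_to_projective_cover
    {R : Type} [CommRing R] [IsDomain R] [IsDiscreteValuationRing R]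
    (p : ℕ) (hp : p.Prime) [MixedCharZero R p]
    (φR : R →+* R)
    -- its cohomology, with the induced semilinear endomorphisms
    (H : ℤ → Type) [∀ j, AddCommGroup (H j)] [∀ j, Module R (H j)]
    (φH : ∀ j, H j →ₛₗ[φR] H j)
    -- `C` is nondegenerate
    (hnd : ∀ j, ∃ k : ℕ, ∀ h : H j,
      (p : R) ^ k • h ∈ Submodule.span R (Set.range (φH j)))
    (a : ℤ)
    -- a surjection from a finitely generated projective module
    (P : Type) [AddCommGroup P] [Module R P] [Module.Finite R P] [Module.Projective R P]
    (pr : P →ₗ[R] H a) (hpr : Function.Surjective pr) :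
    ∃ φP : P →ₛₗ[φR] P,
      (∀ x : P, pr (φP x) = φH a (pr x)) ∧
        ∀ (ι : Type) (b : Module.Basis ι R P), LinearIndependent R (fun i => φP (b i)) := by
  have : CharZero R := MixedCharZero.toCharZero p
  have : Module.Free R P := Module.free_of_flat_of_isLocalRing
  let e := Module.Free.chooseBasis R P
  obtain ⟨k, hk⟩ := hnd a
  choose x hx using fun i => hpr (φH a (pr (e i)))
  obtain ⟨y, hyx, hy⟩ := exists_linearIndependent_sub_mem (finrank_eq_nat_card_basis e).symm
    (LinearMap.ker pr) x (pow_ne_zero k (Nat.cast_ne_zero.mpr hp.ne_zero))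
    (smul_mem_span_range_sup_ker pr hpr (φH a) e.span_eq hx hk)
  refine ⟨e.semilinearConstr φR y, fun v => ?_, fun ι b => ?_⟩
  · have hlift : pr ∘ₛₗ e.semilinearConstr φR y = φH a ∘ₛₗ pr := e.ext fun i => by
      simpa [sub_eq_zero, hx] using hyx i
    exact LinearMap.congr_fun hlift v
  · have := Module.Finite.finite_basis b
    exact LinearIndependent.semilinearMap_comp_basis _ e b (by simpa [Function.comp_def] using hy)
end

section
/- Let R be a p-adically complete commutative ring with endomorphism φ_R, and I ⊆ R a closed φ_R-invariant ideal such that φ_R induces an automorphism of W = R/I and acts topologically nilpotently on I (i.e. nilpotently on I/pI). Then the projection R → W admits a unique ring-theoretic section s : W → R satisfying s ∘ φ_W = φ_R ∘ s. -/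
/-!
Replace `φR` by `g = φR ^ n` and `φW` by `ψ = φW ^ n`: the nilpotence hypothesis becomes
`g(I) ⊆ pI`, hence `g^k(I) ⊆ p^k R`. So `w ↦ g^k(a)`, for any lift `a` of `ψ^{-k} w`, is a
well-defined ring map `R/I → R/p^k R`. These maps are compatible and assemble, by `p`-adic
completeness, into a ring map `s : R/I → R`, which is a section because `I` is closed.
Any `ψ`-equivariant section reduces modulo `p^k` to the same maps, whence uniqueness; applied to
`φR ∘ s ∘ φW⁻¹`, uniqueness also gives the `φW`-equivariance of `s`.
-/

open Ideal Function

section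

variable {R : Type*} [CommRing R] {J I : Ideal R} {g : R →+* R}

theorem Ideal.map_pow_le_of_map_le (hJ : J.map g ≤ J) (k : ℕ) : J.map (g ^ k) ≤ J := by
  induction k with
  | zero => simp [RingHom.one_def]
  | succ k ih =>
    rw [pow_succ', RingHom.mul_def, ← map_map]
    exact (map_mono ih).trans hJ

theorem Ideal.map_pow_le_pow_of_map_le_mul (hJ : J.map g ≤ J) (hI : I.map g ≤ J * I) (k : ℕ) :
    I.map (g ^ k) ≤ J ^ k := by
  induction k with
  | zero => simp [RingHom.one_def]
  | succ k ih =>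
    rw [pow_succ, RingHom.mul_def, ← map_map, _root_.pow_succ']
    calc (I.map g).map (g ^ k) ≤ (J * I).map (g ^ k) := map_mono hI
      _ = J.map (g ^ k) * I.map (g ^ k) := Ideal.map_mul _ _ _
      _ ≤ J * J ^ k := Ideal.mul_mono (map_pow_le_of_map_le hJ k) ih

end

theorem Function.Semiconj.ringHom_ringAut_pow {A B : Type*} [Semiring A] [Semiring B] {f : A → B}
    {g : A →+* A} {ψ : RingAut B} (h : Semiconj f g ψ) (k : ℕ) :
    Semiconj f ⇑(g ^ k) ⇑(ψ ^ k) := by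
  simpa only [RingHom.coe_pow, RingAut.coe_pow] using h.iterate_right k

theorem Function.Semiconj.ringAut_ringHom_pow {A B : Type*} [Semiring A] [Semiring B] {f : B → A}
    {ψ : RingAut B} {g : A →+* A} (h : Semiconj f ψ g) (k : ℕ) :
    Semiconj f ⇑(ψ ^ k) ⇑(g ^ k) := by
  simpa only [RingHom.coe_pow, RingAut.coe_pow] using h.iterate_right k

theorem RingEquiv.exists_apply_mk_eq {R : Type*} [CommRing R] {I : Ideal R} (ψ : RingAut (R ⧸ I))
    (w : R ⧸ I) : ∃ a, ψ (Ideal.Quotient.mk I a) = w :=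
  (ψ.surjective.comp Ideal.Quotient.mk_surjective) w

section

variable {R : Type*} [CommRing R] {J I : Ideal R} {g : R →+* R}

noncomputable def sectionModPow (hJ : J.map g ≤ J) (hI : I.map g ≤ J * I)
    (ψ : RingAut (R ⧸ I)) (k : ℕ) : R ⧸ I →+* R ⧸ J ^ k :=
  (Ideal.Quotient.lift I ((Ideal.Quotient.mk (J ^ k)).comp (g ^ k)) fun _ ha ↦
    Ideal.Quotient.eq_zero_iff_mem.2
      (map_pow_le_pow_of_map_le_mul hJ hI k (mem_map_of_mem _ ha))).comp
    ((ψ ^ k).symm : R ⧸ I →+* R ⧸ I)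

variable {ψ : RingAut (R ⧸ I)} {hJ : J.map g ≤ J} {hI : I.map g ≤ J * I}

theorem sectionModPow_pow_mk (k : ℕ) (a : R) :
    sectionModPow hJ hI ψ k ((ψ ^ k) (Ideal.Quotient.mk I a)) =
      Ideal.Quotient.mk (J ^ k) ((g ^ k) a) := by
  rw [sectionModPow, RingHom.comp_apply, RingEquiv.coe_toRingHom, RingEquiv.symm_apply_apply,
    Ideal.Quotient.lift_mk, RingHom.comp_apply]

theorem factorPow_comp_sectionModPow (hψ : Semiconj (Ideal.Quotient.mk I) g ψ) {m k : ℕ}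
    (hmk : m ≤ k) :
    (Ideal.Quotient.factorPow J hmk).comp (sectionModPow hJ hI ψ k) =
      sectionModPow hJ hI ψ m := by
  obtain ⟨j, rfl⟩ := Nat.exists_eq_add_of_le hmk
  refine RingHom.ext fun w ↦ ?_
  obtain ⟨a, rfl⟩ := (ψ ^ (m + j)).exists_apply_mk_eq w
  rw [RingHom.comp_apply, sectionModPow_pow_mk, Ideal.Quotient.factor_mk, pow_add ψ,
    RingAut.mul_apply, ← hψ.ringHom_ringAut_pow j, sectionModPow_pow_mk, pow_add,
    RingHom.mul_def, RingHom.comp_apply]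

variable [IsAdicComplete J R] (hJ hI) (hψ : Semiconj (Ideal.Quotient.mk I) g ψ)

noncomputable def equivariantSection : R ⧸ I →+* R :=
  IsAdicComplete.liftRingHom J (sectionModPow hJ hI ψ) fun hle ↦
    factorPow_comp_sectionModPow hψ hle

theorem mk_equivariantSection_pow_mk (k : ℕ) (a : R) :
    Ideal.Quotient.mk (J ^ k) (equivariantSection hJ hI hψ ((ψ ^ k) (Ideal.Quotient.mk I a))) =
      Ideal.Quotient.mk (J ^ k) ((g ^ k) a) := by
  rw [equivariantSection, IsAdicComplete.mk_liftRingHom, sectionModPow_pow_mk]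

theorem eq_equivariantSection {s : R ⧸ I →+* R}
    (hs : (Ideal.Quotient.mk I).comp s = RingHom.id _) (hsψ : Semiconj s ψ g) :
    s = equivariantSection hJ hI hψ := by
  refine IsAdicComplete.eq_liftRingHom J _ _ s fun k ↦ RingHom.ext fun w ↦ ?_
  obtain ⟨u, rfl⟩ := (ψ ^ k).surjective w
  have hu : Ideal.Quotient.mk I (s u) = u := RingHom.congr_fun hs u
  rw [RingHom.comp_apply, (hsψ.ringAut_ringHom_pow k).eq, ← hu, sectionModPow_pow_mk, hu]

theorem mk_comp_equivariantSection (hclosed : ∀ x, (∀ k, x ∈ I ⊔ J ^ k) → x ∈ I) :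
    (Ideal.Quotient.mk I).comp (equivariantSection hJ hI hψ) = RingHom.id _ := by
  refine RingHom.ext fun w ↦ ?_
  obtain ⟨b, rfl⟩ := Ideal.Quotient.mk_surjective w
  refine Ideal.Quotient.eq.2 (hclosed _ fun k ↦ ?_)
  obtain ⟨a, ha⟩ := (ψ ^ k).exists_apply_mk_eq (Ideal.Quotient.mk I b)
  have hsa : equivariantSection hJ hI hψ (Ideal.Quotient.mk I b) - (g ^ k) a ∈ J ^ k := by
    rw [← Ideal.Quotient.eq, ← ha, mk_equivariantSection_pow_mk]
  have hab : (g ^ k) a - b ∈ I := by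
    rw [← Ideal.Quotient.eq, (hψ.ringHom_ringAut_pow k).eq, ha]
  rw [← sub_add_sub_cancel _ ((g ^ k) a), add_comm]
  exact Submodule.add_mem_sup hab hsa

theorem equivariantSection_semiconj : Semiconj (equivariantSection hJ hI hψ) ψ g := by
  refine semiconj_iff_comp_eq.2 (IsHausdorff.funext' J fun k w ↦ ?_)
  obtain ⟨a, rfl⟩ := (ψ ^ k).exists_apply_mk_eq w
  have hψw : ψ ((ψ ^ k) (Ideal.Quotient.mk I a)) = (ψ ^ k) (Ideal.Quotient.mk I (g a)) := by
    rw [← RingAut.mul_apply, ← pow_succ', pow_succ, RingAut.mul_apply, hψ.eq]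
  have hga : (g ^ k) (g a) = g ((g ^ k) a) := by
    rw [← RingHom.comp_apply, ← RingHom.mul_def, ← pow_succ, pow_succ', RingHom.mul_def,
      RingHom.comp_apply]
  have hmem :
      equivariantSection hJ hI hψ ((ψ ^ k) (Ideal.Quotient.mk I a)) - (g ^ k) a ∈ J ^ k := by
    rw [← Ideal.Quotient.eq, mk_equivariantSection_pow_mk]
  have hgJ : (J ^ k).map g ≤ J ^ k := (Ideal.map_pow g J k).trans_le (Ideal.pow_right_mono hJ k)
  rw [comp_apply, comp_apply, hψw, mk_equivariantSection_pow_mk, hga]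
  refine (Ideal.Quotient.eq.2 ?_).symm
  rw [← map_sub]
  exact hgJ (mem_map_of_mem g hmem)

theorem equivariantSection_semiconj_of_commute
    (hclosed : ∀ x, (∀ k, x ∈ I ⊔ J ^ k) → x ∈ I) {φ : R →+* R}
    {E : RingAut (R ⧸ I)} (hE : Semiconj (Ideal.Quotient.mk I) φ E)
    (hφg : Commute φ g) (hEψ : Commute E ψ) :
    Semiconj (equivariantSection hJ hI hψ) E φ := by
  have hs (w : R ⧸ I) : Ideal.Quotient.mk I (equivariantSection hJ hI hψ w) = w :=
    RingHom.congr_fun (mk_comp_equivariantSection hJ hI hψ hclosed) w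
  have hφg' (x : R) : φ (g x) = g (φ x) := DFunLike.congr_fun hφg.eq x
  have hEψ' (w : R ⧸ I) : E⁻¹ (ψ w) = ψ (E⁻¹ w) := DFunLike.congr_fun hEψ.inv_left.eq w
  let s' : R ⧸ I →+* R :=
    φ.comp ((equivariantSection hJ hI hψ).comp (E⁻¹ : RingAut (R ⧸ I)))
  have hs' : (Ideal.Quotient.mk I).comp s' = RingHom.id _ := RingHom.ext fun w ↦ by
    simp only [s', RingHom.comp_apply, RingEquiv.coe_toRingHom, hE.eq, hs, RingAut.inv_apply,
      RingEquiv.apply_symm_apply, RingHom.id_apply]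
  have hs'ψ : Semiconj s' ψ g := fun w ↦ by
    simp only [s', RingHom.comp_apply, RingEquiv.coe_toRingHom, hEψ',
      (equivariantSection_semiconj hJ hI hψ).eq, hφg']
  intro w
  rw [← DFunLike.congr_fun (eq_equivariantSection hJ hI hψ hs' hs'ψ) (E w)]
  simp only [s', RingHom.comp_apply, RingEquiv.coe_toRingHom, RingAut.inv_apply,
    RingEquiv.symm_apply_apply]

end

theorem unique_frobenius_equivariant_section_general
    {R : Type*} [CommRing R] (p : ℕ)
    [IsAdicComplete (Ideal.span {(p : R)}) R]
    (φR : R →+* R) (I : Ideal R)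
    -- `I` is closed for the `p`-adic topology
    (hclosed : ∀ x : R, (∀ n : ℕ, x ∈ I ⊔ Ideal.span {(p : R) ^ n}) → x ∈ I)
    -- the induced endomorphism `φW` of `W = R/I`
    (φW : R ⧸ I →+* R ⧸ I)
    (hφW : φW.comp (Ideal.Quotient.mk I) = (Ideal.Quotient.mk I).comp φR)
    -- `φW` is an automorphism
    (hbij : Function.Bijective φW)
    -- `φR` is nilpotent on `I / pI`
    (hnilp : ∃ n : ℕ, ∀ x ∈ I, (⇑φR)^[n] x ∈ Ideal.span {(p : R)} * I) :
    ∃! s : R ⧸ I →+* R,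
      (Ideal.Quotient.mk I).comp s = RingHom.id (R ⧸ I) ∧
        s.comp φW = φR.comp s := by
  obtain ⟨n, hn⟩ := hnilp
  let E : RingAut (R ⧸ I) := RingEquiv.ofBijective φW hbij
  have hE : Semiconj (Ideal.Quotient.mk I) φR E := fun x ↦ (RingHom.congr_fun hφW x).symm
  have hJ : (Ideal.span {(p : R)}).map (φR ^ n) ≤ Ideal.span {(p : R)} := by
    rw [Ideal.map_span, Set.image_singleton, map_natCast]
  have hI : I.map (φR ^ n) ≤ Ideal.span {(p : R)} * I :=
    Ideal.map_le_iff_le_comap.2 fun x hx ↦ by simpa using hn x hx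
  have hψ := hE.ringHom_ringAut_pow n
  have hclosed' : ∀ x, (∀ k, x ∈ I ⊔ Ideal.span {(p : R)} ^ k) → x ∈ I := by
    simpa only [Ideal.span_singleton_pow] using hclosed
  refine ⟨equivariantSection hJ hI hψ, ⟨mk_comp_equivariantSection hJ hI hψ hclosed',
    RingHom.ext fun w ↦ equivariantSection_semiconj_of_commute hJ hI hψ hclosed' hE
      (Commute.self_pow φR n) (Commute.self_pow E n) w⟩, ?_⟩
  rintro s ⟨hs, hsφ⟩
  have hsE : Semiconj s E φR := fun w ↦ RingHom.congr_fun hsφ w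
  exact eq_equivariantSection hJ hI hψ hs (hsE.ringAut_ringHom_pow n)

theorem unique_frobenius_equivariant_section
    {R : Type*} [CommRing R] (p : ℕ) (hp : p.Prime)
    [IsAdicComplete (Ideal.span {(p : R)}) R]
    (φR : R →+* R) (I : Ideal R)
    -- `I` is closed for the `p`-adic topology
    (hclosed : ∀ x : R, (∀ n : ℕ, x ∈ I ⊔ Ideal.span {(p : R) ^ n}) → x ∈ I)
    -- `I` is `φR`-invariant
    (hinv : ∀ x ∈ I, φR x ∈ I)
    -- the induced endomorphism `φW` of `W = R/I`
    (φW : R ⧸ I →+* R ⧸ I)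
    (hφW : φW.comp (Ideal.Quotient.mk I) = (Ideal.Quotient.mk I).comp φR)
    -- `φW` is an automorphism
    (hbij : Function.Bijective φW)
    -- `φR` is nilpotent on `I / pI`
    (hnilp : ∃ n : ℕ, ∀ x ∈ I, (⇑φR)^[n] x ∈ Ideal.span {(p : R)} * I) :
    ∃! s : R ⧸ I →+* R,
      (Ideal.Quotient.mk I).comp s = RingHom.id (R ⧸ I) ∧
        s.comp φW = φR.comp s :=
  unique_frobenius_equivariant_section_general p φR I hclosed φW hφW hbij hnilp
end

section
/- With notation as in the Dold–Kan shuffle-product setting: let C• be a strictly commutative nonnegatively graded dg algebra, A* = K*(C•), and J ⊆ C⁰ = A⁰ an ideal with a divided power structure. Then the pd structures on J and on V* (the canonical pd structure on the kernel of degeneration) are compatible—i.e. extend to a pd structure on the cosimplicial ideal generated by J compatible with the cosimplicial structure maps—if and only if d(f^{[n]}) = f^{[n-1]} d(f) in C¹ for every f ∈ J and n > 0. -/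
structure CosimplicialCommRing where
  A : ℕ → Type
  [cr : ∀ n, CommRing (A n)]
  act : ∀ {m n : ℕ}, (Fin (m + 1) →o Fin (n + 1)) → (A m →+* A n)
  act_id : ∀ n, act (OrderHom.id : Fin (n + 1) →o Fin (n + 1)) = RingHom.id (A n)
  act_comp : ∀ {m n k : ℕ} (f : Fin (m + 1) →o Fin (n + 1))
    (g : Fin (n + 1) →o Fin (k + 1)), (act g).comp (act f) = act (g.comp f)

attribute [instance] CosimplicialCommRing.cr

namespace CosimplicialCommRing

variable (X : CosimplicialCommRing)

/-- `Vⁿ`: the kernel of the total degeneration `Aⁿ → A⁰`. -/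
def V (n : ℕ) : Ideal (X.A n) :=
  RingHom.ker (X.act (OrderHom.const (Fin (n + 1)) (0 : Fin 1)))

/-- `Cᵐ`: the normalized part of `Aᵐ`. -/
def normalized (m : ℕ) : Set (X.A m) :=
  {x | ∀ k : ℕ, k < m → ∀ g : Fin (m + 1) →o Fin (k + 1),
    Function.Surjective g → X.act g x = 0}

/-- The coface `∂₁ : A⁰ → A¹` induced by `[0] → [1], 0 ↦ 0`
(also the `E(0,1)`-structure map giving the `C⁰`-module structure on `C¹`). -/
def face0 : X.A 0 →+* X.A 1 := X.act (OrderHom.const (Fin 1) (0 : Fin 2))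

/-- The coface `∂₀ : A⁰ → A¹` induced by `[0] → [1], 0 ↦ 1`. -/
def face1 : X.A 0 →+* X.A 1 := X.act (OrderHom.const (Fin 1) (1 : Fin 2))

/-- The normalized differential `d = ∂₀ − ∂₁ : A⁰ → A¹`. -/
def diff (f : X.A 0) : X.A 1 := X.face1 f - X.face0 f

/-- The cosimplicial ideal generated by `J` (and `V*`):
`J_Aⁿ = (image of J) ⊔ Vⁿ`. -/
def Jext (J : Ideal (X.A 0)) (n : ℕ) : Ideal (X.A n) :=
  Ideal.span (X.act (OrderHom.const (Fin 1) (0 : Fin (n + 1))) '' (J : Set (X.A 0))) ⊔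
    X.V n

end CosimplicialCommRing

/-!
Write `s : Aⁿ → A⁰` for the total degeneracy and `ι = X.vertex n 0 : A⁰ → Aⁿ`. Every `x` in
`J_Aⁿ = s⁻¹(J)` is `ι f + v` with `f = s x ∈ J` and `v ∈ Vⁿ = ker s`, so a common extension of
`γJ` and `γV` must be `γₖ(x) = Σ_{a+b=k} ι(f^[a]) v^[b]`, and this formula always defines
divided powers. Additivity comes from that of `γJ` and `γV` through exponential series, and
`γₖ(c x) = cᵏ γₖ(x)` from `ι(f^[a]) ι(f)^b = b! C(a+b, a) ι(f^[a+b])`. The product and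
composition rules are identities between `ℕ`-combinations of the products `ι(f^[a]) v^[b]` whose
coefficients do not depend on the ring, so they can be checked in `ℚ[X₀, X₁]`, where these
products are `X₀^[a] X₁^[b]` and `γₖ(x)` is `(X₀ + X₁)^[k]`.

In degree `1`, `face1 f = face0 f + d f` with `d f` normalized, so `(d f)^[b] = 0` for `b ≥ 2`
and `γ_{k+1}(face1 f) = face0(f^[k+1]) + face0(f^[k]) d f`. Hence `face1` commutes with the
divided powers exactly when `d(f^[k+1]) = face0(f^[k]) d f`. Since every vertex map `A⁰ → Aⁿ` is
`face1` followed by an edge `[1] → [n]` starting at `0`, this is all that compatibility with the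
cosimplicial maps requires.
-/

open Finset

theorem Finset.Nat.sum_antidiagonal_eq_left {M : Type*} [AddCommMonoid M] {f : ℕ × ℕ → M}
    (k : ℕ) (h : ∀ p ∈ antidiagonal k, p.2 ≠ 0 → f p = 0) :
    ∑ p ∈ antidiagonal k, f p = f (k, 0) :=
  sum_eq_single_of_mem (k, 0) (by simp) fun p hp hne =>
    h p hp fun h2 => hne (Prod.ext (by rw [HasAntidiagonal.mem_antidiagonal] at hp; omega) h2)

theorem Finset.Nat.sum_antidiagonal_eq_right {M : Type*} [AddCommMonoid M] {f : ℕ × ℕ → M}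
    (k : ℕ) (h : ∀ p ∈ antidiagonal k, p.1 ≠ 0 → f p = 0) :
    ∑ p ∈ antidiagonal k, f p = f (0, k) :=
  sum_eq_single_of_mem (0, k) (by simp) fun p hp hne =>
    h p hp fun h1 => hne (Prod.ext h1 (by rw [HasAntidiagonal.mem_antidiagonal] at hp; omega))

theorem DividedPowers.sum_mul_dpow_eq_of_dpow_eq_zero {A : Type*} [CommRing A] {I : Ideal A}
    (hI : DividedPowers I) {v : A} (hv : v ∈ I) (h : ∀ b, 1 < b → hI.dpow b v = 0)
    (P : ℕ → A) (k : ℕ) :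
    ∑ p ∈ antidiagonal (k + 1), P p.1 * hI.dpow p.2 v = P (k + 1) + P k * v := by
  rw [Nat.sum_antidiagonal_succ', Finset.Nat.sum_antidiagonal_eq_left k fun p _ hp => by
    rw [h _ (by omega), mul_zero], hI.dpow_zero hv, hI.dpow_one hv, mul_one]

/-- `P` stands for the divided powers of an element `u` outside `I`, so that `dp k` plays the
role of `(u + v)^[k]`. -/
structure DPSumData (S : Type) [CommRing S] where
  I : Ideal S
  hI : DividedPowers I
  P : ℕ → S
  v : S
  v_mem : v ∈ I
  P_zero : P 0 = 1
  P_mul : ∀ a b, P a * P b = (a + b).choose a * P (a + b)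

namespace DPSumData

section Terms

variable {S : Type} [CommRing S] (D : DPSumData S)

def term (p q : ℕ) : S := D.P p * D.hI.dpow q D.v

def dp (k : ℕ) : S := ∑ x ∈ antidiagonal k, D.term x.1 x.2

noncomputable def eval : ((ℕ × ℕ) →₀ ℕ) →+ S :=
  Finsupp.liftAddHom fun x => multiplesHom S (D.term x.1 x.2)

theorem eval_single (x : ℕ × ℕ) (n : ℕ) : D.eval (Finsupp.single x n) = n • D.term x.1 x.2 :=
  Finsupp.liftAddHom_apply_single _ _ _

theorem term_zero_zero : D.term 0 0 = 1 := by
  rw [term, D.P_zero, D.hI.dpow_zero D.v_mem, one_mul]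

theorem term_mul_term (a b p q : ℕ) :
    D.term a b * D.term p q =
      ((a + p).choose a * (b + q).choose b) • D.term (a + p) (b + q) := by
  calc D.term a b * D.term p q = D.P a * D.P p * (D.hI.dpow b D.v * D.hI.dpow q D.v) := by
        rw [term, term]; ring
    _ = _ := by
        rw [D.P_mul, D.hI.mul_dpow D.v_mem, term, nsmul_eq_mul]
        push_cast
        ring

theorem dpow_term {p q : ℕ} (hq : q ≠ 0) (n : ℕ) :
    D.hI.dpow n (D.term p q) = D.term p 0 ^ n * (Nat.uniformBell n q • D.term 0 (n * q)) := by
  rw [term, D.hI.dpow_mul (D.hI.dpow_mem hq D.v_mem), D.hI.dpow_comp hq D.v_mem, term, term,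
    D.P_zero, D.hI.dpow_zero D.v_mem, mul_one, one_mul, nsmul_eq_mul]

theorem term_mem (p : ℕ) {q : ℕ} (hq : q ≠ 0) : D.term p q ∈ D.I :=
  D.I.mul_mem_left _ (D.hI.dpow_mem hq D.v_mem)

theorem dp_sub_P (k : ℕ) :
    D.dp k - D.P k = ∑ x ∈ (antidiagonal k).filter (·.2 ≠ 0), D.term x.1 x.2 := by
  rw [dp, ← sum_filter_add_sum_filter_not (antidiagonal k) (·.2 ≠ 0), add_sub_assoc,
    add_eq_left, sub_eq_zero]
  have : (antidiagonal k).filter (fun x => ¬x.2 ≠ 0) = {(k, 0)} := by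
    ext ⟨a, b⟩
    simp only [mem_filter, HasAntidiagonal.mem_antidiagonal, not_not, mem_singleton, Prod.mk.injEq]
    constructor <;> intro h <;> omega
  rw [this, sum_singleton, term, D.hI.dpow_zero D.v_mem, mul_one]

end Terms

section Model

open MvPolynomial DividedPowers

noncomputable def model : DPSumData (MvPolynomial (Fin 2) ℚ) :=
  letI : DividedPowers (⊤ : Ideal (MvPolynomial (Fin 2) ℚ)) := by
    classical exact RatAlgebra.dividedPowers ⊤
  { I := ⊤
    hI := this
    P := fun a => this.dpow a (X 0)
    v := X 1
    v_mem := Submodule.mem_top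
    P_zero := this.dpow_zero Submodule.mem_top
    P_mul := fun _ _ => this.mul_dpow Submodule.mem_top }

theorem model_term (p q : ℕ) :
    model.term p q = ((p.factorial : ℚ)⁻¹ * (q.factorial : ℚ)⁻¹) •
      monomial (Finsupp.single 0 p + Finsupp.single 1 q) 1 := by
  simp only [term, model]
  rw [RatAlgebra.dpow_eq_inv_fact_smul _ _ Submodule.mem_top,
    RatAlgebra.dpow_eq_inv_fact_smul _ _ Submodule.mem_top, Ring.inverse_eq_inv,
    Ring.inverse_eq_inv, smul_mul_smul_comm, X_pow_eq_monomial, X_pow_eq_monomial,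
    monomial_mul, one_mul]

theorem coeff_model_eval (c : (ℕ × ℕ) →₀ ℕ) (y : ℕ × ℕ) :
    coeff (Finsupp.single 0 y.1 + Finsupp.single 1 y.2) (model.eval c) =
      c y * ((y.1.factorial : ℚ)⁻¹ * (y.2.factorial : ℚ)⁻¹) := by
  classical
  induction c using Finsupp.induction_linear with
  | zero => simp
  | add c c' hc hc' => rw [map_add, coeff_add, hc, hc', Finsupp.add_apply, Nat.cast_add, add_mul]
  | single x n =>
    rw [eval_single, coeff_smul, model_term, coeff_smul, coeff_monomial, Finsupp.single_apply]
    by_cases h : x = y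
    · subst h; simp
    · have : Finsupp.single 0 x.1 + Finsupp.single 1 x.2 ≠
          Finsupp.single (0 : Fin 2) y.1 + Finsupp.single 1 y.2 := fun he =>
        h (Prod.ext (by simpa using congrArg (· 0) he) (by simpa using congrArg (· 1) he))
      simp [h, this]

theorem model_eval_injective : Function.Injective model.eval := by
  intro c c' h
  ext y
  have := congrArg (coeff (Finsupp.single 0 y.1 + Finsupp.single 1 y.2)) h
  rw [coeff_model_eval, coeff_model_eval] at this
  exact_mod_cast mul_right_cancel₀ (by positivity) this

theorem model_dp (k : ℕ) : model.dp k = model.hI.dpow k (X 0 + X 1) :=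
  (model.hI.dpow_add Submodule.mem_top Submodule.mem_top).symm

end Model

def IsUniversal (F : ∀ (S : Type) [CommRing S], DPSumData S → S) : Prop :=
  ∃ c : (ℕ × ℕ) →₀ ℕ, ∀ (S : Type) [CommRing S] (D : DPSumData S), F S D = D.eval c

namespace IsUniversal

variable {F G : ∀ (S : Type) [CommRing S], DPSumData S → S}

theorem of_eq (h : ∀ (S : Type) [CommRing S] (D : DPSumData S), F S D = G S D)
    (hG : IsUniversal G) : IsUniversal F := by
  obtain ⟨c, hc⟩ := hG
  exact ⟨c, fun S _ D => (h S D).trans (hc S D)⟩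

theorem term (p q : ℕ) : IsUniversal fun _ _ D => D.term p q :=
  ⟨Finsupp.single (p, q) 1, fun _ _ D => by rw [eval_single, one_smul]⟩

theorem one : IsUniversal fun _ _ _ => 1 :=
  ⟨Finsupp.single (0, 0) 1, fun _ _ D => by rw [eval_single, one_smul, term_zero_zero]⟩

theorem add (hF : IsUniversal F) (hG : IsUniversal G) :
    IsUniversal fun S _ D => F S D + G S D := by
  obtain ⟨a, ha⟩ := hF
  obtain ⟨b, hb⟩ := hG
  exact ⟨a + b, fun S _ D => by dsimp only; rw [ha, hb, map_add]⟩

theorem nsmul (n : ℕ) (hF : IsUniversal F) :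
    IsUniversal fun S _ D => n • F S D := by
  obtain ⟨a, ha⟩ := hF
  exact ⟨n • a, fun S _ D => by dsimp only; rw [ha, map_nsmul]⟩

theorem sum {κ : Type*} (s : Finset κ) {Φ : κ → ∀ (S : Type) [CommRing S], DPSumData S → S}
    (hΦ : ∀ i ∈ s, IsUniversal (Φ i)) : IsUniversal fun S _ D => ∑ i ∈ s, Φ i S D := by
  classical
  induction s using Finset.induction with
  | empty => exact ⟨0, fun S _ D => by dsimp only; rw [sum_empty, map_zero]⟩
  | insert i s hi ih =>
    simp_rw [sum_insert hi]
    exact add (hΦ i (mem_insert_self i s)) (ih fun j hj => hΦ j (mem_insert_of_mem hj))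

theorem eval_mul_eval (a b : (ℕ × ℕ) →₀ ℕ) :
    IsUniversal fun _ _ D => D.eval a * D.eval b := by
  induction a using Finsupp.induction_linear with
  | zero => exact ⟨0, fun S _ D => by simp⟩
  | add a a' ha ha' => simpa only [map_add, add_mul] using add ha ha'
  | single x n =>
    induction b using Finsupp.induction_linear with
    | zero => exact ⟨0, fun S _ D => by simp⟩
    | add b b' hb hb' => simpa only [map_add, mul_add] using add hb hb'
    | single y m =>
      simpa only [eval_single, smul_mul_smul_comm, term_mul_term, smul_smul] using
        nsmul _ (term (x.1 + y.1) (x.2 + y.2))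

theorem mul (hF : IsUniversal F) (hG : IsUniversal G) :
    IsUniversal fun S _ D => F S D * G S D := by
  obtain ⟨a, ha⟩ := hF
  obtain ⟨b, hb⟩ := hG
  simpa only [ha, hb] using eval_mul_eval a b

theorem pow (hF : IsUniversal F) (n : ℕ) :
    IsUniversal fun S _ D => F S D ^ n := by
  induction n with
  | zero => simpa only [pow_zero] using one
  | succ n ih => simpa only [pow_succ] using mul ih hF

theorem dpow_sum_term (s : Finset (ℕ × ℕ)) (hs : ∀ x ∈ s, x.2 ≠ 0) (n : ℕ) :
    IsUniversal fun _ _ D => D.hI.dpow n (∑ x ∈ s, D.term x.1 x.2) := by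
  classical
  induction s using Finset.induction generalizing n with
  | empty =>
    rcases eq_or_ne n 0 with rfl | hn
    · refine of_eq (fun S _ D => ?_) one
      rw [sum_empty, D.hI.dpow_zero D.I.zero_mem]
    · exact ⟨0, fun S _ D => by dsimp only; rw [sum_empty, D.hI.dpow_eval_zero hn, map_zero]⟩
  | insert x s hx ih =>
    have hx₂ : x.2 ≠ 0 := hs x (mem_insert_self x s)
    have hs' : ∀ y ∈ s, y.2 ≠ 0 := fun y hy => hs y (mem_insert_of_mem hy)
    refine of_eq (fun S _ D => ?_) (sum (antidiagonal n) fun p _ =>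
      mul (mul (pow (term x.1 0) p.1) (nsmul (Nat.uniformBell p.1 x.2) (term 0 (p.1 * x.2))))
        (ih hs' p.2))
    rw [sum_insert hx, D.hI.dpow_add (D.term_mem _ hx₂)
      (D.I.sum_mem fun y hy => D.term_mem _ (hs' y hy))]
    simp only [D.dpow_term hx₂]

theorem dp (k : ℕ) : IsUniversal fun _ _ D => D.dp k :=
  sum _ fun x _ => term x.1 x.2

theorem eq_of_eq_model (hF : IsUniversal F) (hG : IsUniversal G) (h : F _ model = G _ model)
    {S : Type} [CommRing S] (D : DPSumData S) : F S D = G S D := by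
  obtain ⟨a, ha⟩ := hF
  obtain ⟨b, hb⟩ := hG
  rw [ha, hb, model_eval_injective ((ha _ model).symm.trans (h.trans (hb _ model)))]

end IsUniversal

variable {S : Type} [CommRing S] (D : DPSumData S)

theorem dp_mul_dp (m k : ℕ) : D.dp m * D.dp k = (m + k).choose m • D.dp (m + k) :=
  IsUniversal.eq_of_eq_model (F := fun _ _ D => D.dp m * D.dp k)
    ((IsUniversal.dp m).mul (IsUniversal.dp k)) ((IsUniversal.dp (m + k)).nsmul _)
    (by simp only [model_dp, model.hI.mul_dpow Submodule.mem_top, nsmul_eq_mul]) D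

theorem sum_uniformBell_smul_P_mul_dpow {k : ℕ} (hk : k ≠ 0) (m : ℕ) :
    ∑ x ∈ antidiagonal m, Nat.uniformBell x.1 k • (D.P (x.1 * k) * D.hI.dpow x.2 (D.dp k - D.P k))
      = Nat.uniformBell m k • D.dp (m * k) := by
  refine IsUniversal.eq_of_eq_model
    (F := fun _ _ D => ∑ x ∈ antidiagonal m,
      Nat.uniformBell x.1 k • (D.P (x.1 * k) * D.hI.dpow x.2 (D.dp k - D.P k)))
    (IsUniversal.sum _ fun x _ => IsUniversal.nsmul _ (IsUniversal.mul ?_ ?_))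
    ((IsUniversal.dp (m * k)).nsmul _) ?_ D
  · refine IsUniversal.of_eq (fun S _ D => ?_) (IsUniversal.term (x.1 * k) 0)
    rw [term, D.hI.dpow_zero D.v_mem, mul_one]
  · refine IsUniversal.of_eq (fun S _ D => ?_)
      (IsUniversal.dpow_sum_term ((antidiagonal k).filter (·.2 ≠ 0))
        (fun y hy => (mem_filter.mp hy).2) x.2)
    rw [dp_sub_P]
  · have hP (c : ℕ) : Nat.uniformBell c k • model.P (c * k) = model.hI.dpow c (model.P k) := by
      rw [nsmul_eq_mul]
      exact (model.hI.dpow_comp hk Submodule.mem_top).symm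
    simp only [← smul_mul_assoc, hP]
    rw [← model.hI.dpow_add Submodule.mem_top Submodule.mem_top, add_sub_cancel, model_dp,
      model_dp, model.hI.dpow_comp hk Submodule.mem_top, nsmul_eq_mul]

end DPSumData

namespace DividedPowers

section SplitExtension

variable {R A : Type} [CommRing R] [CommRing A] (s : R →+* A) (ι : A →+* R) {J : Ideal A}
  (hJ : DividedPowers J) (hV : DividedPowers (RingHom.ker s))

def splitDpow (k : ℕ) (x : R) : R :=
  ∑ p ∈ antidiagonal k, ι (hJ.dpow p.1 (s x)) * hV.dpow p.2 (x - ι (s x))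

variable {s ι} (hsι : ∀ a, s (ι a) = a)
include hsι

theorem sub_mem_ker (x : R) : x - ι (s x) ∈ RingHom.ker s := by
  rw [RingHom.mem_ker, map_sub, hsι, sub_self]

def splitDPSumData {x : R} (hx : s x ∈ J) : DPSumData R where
  I := RingHom.ker s
  hI := hV
  P a := ι (hJ.dpow a (s x))
  v := x - ι (s x)
  v_mem := sub_mem_ker hsι x
  P_zero := by rw [hJ.dpow_zero hx, map_one]
  P_mul a b := by rw [← map_mul, hJ.mul_dpow hx, map_mul, map_natCast]

omit hsι in
theorem mk_splitDpow (x : R) :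
    PowerSeries.mk (fun k => splitDpow s ι hJ hV k x) =
      (hJ.exp (s x)).map ι * hV.exp (x - ι (s x)) := by
  ext k
  simp [splitDpow, PowerSeries.coeff_mul, DividedPowers.exp]

theorem splitDpow_add {x y : R} (hx : s x ∈ J) (hy : s y ∈ J) (k : ℕ) :
    splitDpow s ι hJ hV k (x + y) =
      ∑ p ∈ antidiagonal k, splitDpow s ι hJ hV p.1 x * splitDpow s ι hJ hV p.2 y := by
  have h : PowerSeries.mk (fun k => splitDpow s ι hJ hV k (x + y)) =
      PowerSeries.mk (fun k => splitDpow s ι hJ hV k x) *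
        PowerSeries.mk (fun k => splitDpow s ι hJ hV k y) := by
    rw [mk_splitDpow, mk_splitDpow, mk_splitDpow, map_add, hJ.exp_add hx hy, map_mul, map_add,
      add_sub_add_comm, hV.exp_add (sub_mem_ker hsι x) (sub_mem_ker hsι y)]
    ring
  simpa [PowerSeries.coeff_mul] using congrArg (PowerSeries.coeff k) h

theorem splitDpow_ι (f : A) (k : ℕ) :
    splitDpow s ι hJ hV k (ι f) = ι (hJ.dpow k f) := by
  rw [splitDpow, hsι, sub_self, Finset.Nat.sum_antidiagonal_eq_left k fun p _ hp => by
    rw [hV.dpow_eval_zero hp, mul_zero], hV.dpow_zero (zero_mem _), mul_one]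

omit hsι in
theorem splitDpow_of_mem_ker {v : R} (hv : v ∈ RingHom.ker s) (k : ℕ) :
    splitDpow s ι hJ hV k v = hV.dpow k v := by
  rw [splitDpow, RingHom.mem_ker.mp hv, map_zero, sub_zero,
    Finset.Nat.sum_antidiagonal_eq_right k fun p _ hp => by
      rw [hJ.dpow_eval_zero hp, map_zero, zero_mul], hJ.dpow_zero J.zero_mem, map_one, one_mul]

theorem apply_splitDpow (x : R) (k : ℕ) :
    s (splitDpow s ι hJ hV k x) = hJ.dpow k (s x) := by
  rw [splitDpow, map_sum, Finset.Nat.sum_antidiagonal_eq_left k fun p _ hp => by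
    rw [map_mul, RingHom.mem_ker.mp (hV.dpow_mem hp (sub_mem_ker hsι x)), mul_zero],
    map_mul, hsι, hV.dpow_zero (sub_mem_ker hsι x), map_one, mul_one]

theorem splitDpow_mul_ι {f : A} (hf : f ∈ J) (c : R) (k : ℕ) :
    splitDpow s ι hJ hV k (c * ι f) = c ^ k * ι (hJ.dpow k f) := by
  set r := ι (s c)
  set u := c - r
  have hu : u ∈ RingHom.ker s := sub_mem_ker hsι c
  have hterm : ∀ p ∈ antidiagonal k, ι (hJ.dpow p.1 (s c * f)) * hV.dpow p.2 (u * ι f) =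
      (k.choose p.1 • (r ^ p.1 * u ^ p.2)) * ι (hJ.dpow k f) := by
    rintro ⟨a, b⟩ hab
    rw [HasAntidiagonal.mem_antidiagonal] at hab
    subst hab
    have hJab : ι (hJ.dpow a f) * ι f ^ b =
        (b.factorial * (a + b).choose a : R) * ι (hJ.dpow (a + b) f) := by
      rw [← map_pow, ← map_mul, ← hJ.factorial_mul_dpow_eq_pow hf, mul_left_comm,
        hJ.mul_dpow hf, ← mul_assoc, map_mul, map_mul, map_natCast, map_natCast]
    dsimp only
    rw [hJ.dpow_mul hf, map_mul, map_pow, mul_comm u, hV.dpow_mul hu, nsmul_eq_mul,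
      ← hV.factorial_mul_dpow_eq_pow hu]
    linear_combination (r ^ a * hV.dpow b u) * hJab
  calc splitDpow s ι hJ hV k (c * ι f)
      = ∑ p ∈ antidiagonal k, (k.choose p.1 • (r ^ p.1 * u ^ p.2)) * ι (hJ.dpow k f) := by
        have hcf : c * ι f - ι (s (c * ι f)) = u * ι f := by rw [map_mul, hsι, map_mul]; ring
        rw [splitDpow, hcf, map_mul s, hsι]
        exact sum_congr rfl hterm
    _ = c ^ k * ι (hJ.dpow k f) := by
        rw [← sum_mul, ← (Commute.all r u).add_pow', add_sub_cancel]

theorem splitDpow_mul {x : R} (hx : s x ∈ J) (c : R) (k : ℕ) :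
    splitDpow s ι hJ hV k (c * x) = c ^ k * splitDpow s ι hJ hV k x := by
  have hv : c * (x - ι (s x)) ∈ RingHom.ker s := Ideal.mul_mem_left _ c (sub_mem_ker hsι x)
  have hι : s (c * ι (s x)) ∈ J := by rw [map_mul, hsι]; exact J.mul_mem_left _ hx
  have hv' : s (c * (x - ι (s x))) ∈ J := by rw [RingHom.mem_ker.mp hv]; exact J.zero_mem
  rw [show c * x = c * ι (s x) + c * (x - ι (s x)) by ring, splitDpow_add hJ hV hsι hι hv',
    splitDpow, mul_sum]
  refine sum_congr rfl fun p hp => ?_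
  rw [splitDpow_mul_ι hJ hV hsι hx, splitDpow_of_mem_ker hJ hV hv,
    hV.dpow_mul (sub_mem_ker hsι x), ← HasAntidiagonal.mem_antidiagonal.mp hp, pow_add]
  ring

theorem splitDpow_mul_splitDpow {x : R} (hx : s x ∈ J) (m k : ℕ) :
    splitDpow s ι hJ hV m x * splitDpow s ι hJ hV k x =
      (m + k).choose m * splitDpow s ι hJ hV (m + k) x := by
  rw [← nsmul_eq_mul]
  exact (splitDPSumData hJ hV hsι hx).dp_mul_dp m k

theorem splitDpow_splitDpow {x : R} (hx : s x ∈ J) (m : ℕ) {k : ℕ} (hk : k ≠ 0) :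
    splitDpow s ι hJ hV m (splitDpow s ι hJ hV k x) =
      Nat.uniformBell m k * splitDpow s ι hJ hV (m * k) x := by
  set D := splitDPSumData hJ hV hsι hx
  calc splitDpow s ι hJ hV m (splitDpow s ι hJ hV k x)
      = ∑ p ∈ antidiagonal m,
          Nat.uniformBell p.1 k • (D.P (p.1 * k) * D.hI.dpow p.2 (D.dp k - D.P k)) := by
        rw [splitDpow, apply_splitDpow hJ hV hsι]
        refine sum_congr rfl fun p _ => ?_
        rw [hJ.dpow_comp hk hx, map_mul, map_natCast, nsmul_eq_mul, mul_assoc]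
        rfl
    _ = _ := by rw [D.sum_uniformBell_smul_P_mul_dpow hk, nsmul_eq_mul]; rfl

def splitExt {I : Ideal R} (hI : ∀ x, x ∈ I ↔ s x ∈ J) : DividedPowers I where
  dpow := splitDpow s ι hJ hV
  dpow_null hx := sum_eq_zero fun p _ => by
    rw [hJ.dpow_null fun h => hx ((hI _).mpr h), map_zero, zero_mul]
  dpow_zero hx := by
    rw [splitDpow, Nat.antidiagonal_zero, sum_singleton, hJ.dpow_zero ((hI _).mp hx),
      hV.dpow_zero (sub_mem_ker hsι _), map_one, one_mul]
  dpow_one hx := by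
    rw [splitDpow, Nat.sum_antidiagonal_succ, Nat.antidiagonal_zero, sum_singleton,
      hJ.dpow_zero ((hI _).mp hx), hJ.dpow_one ((hI _).mp hx), hV.dpow_one (sub_mem_ker hsι _),
      hV.dpow_zero (sub_mem_ker hsι _), map_one]
    ring
  dpow_mem hn hx := (hI _).mpr (apply_splitDpow hJ hV hsι _ _ ▸ hJ.dpow_mem hn ((hI _).mp hx))
  dpow_add hx hy := splitDpow_add hJ hV hsι ((hI _).mp hx) ((hI _).mp hy) _
  dpow_mul hx := splitDpow_mul hJ hV hsι ((hI _).mp hx) _ _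
  mul_dpow hx := splitDpow_mul_splitDpow hJ hV hsι ((hI _).mp hx) _ _
  dpow_comp hk hx := splitDpow_splitDpow hJ hV hsι ((hI _).mp hx) _ hk

theorem splitDpow_map {R' : Type} [CommRing R'] {s' : R' →+* A} {ι' : A →+* R'}
    (hsι' : ∀ a, s' (ι' a) = a) (hV' : DividedPowers (RingHom.ker s')) (g : R →+* R')
    (hg : ∀ x, s' (g x) = s x)
    (hgV : ∀ k, ∀ v ∈ RingHom.ker s, hV'.dpow k (g v) = g (hV.dpow k v))
    (hgι : ∀ f ∈ J, ∀ k, splitDpow s' ι' hJ hV' k (g (ι f)) = g (ι (hJ.dpow k f)))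
    {x : R} (hx : s x ∈ J) (k : ℕ) :
    splitDpow s' ι' hJ hV' k (g x) = g (splitDpow s ι hJ hV k x) := by
  have hv := sub_mem_ker hsι x
  have hgv : g (x - ι (s x)) ∈ RingHom.ker s' := by
    rw [RingHom.mem_ker, hg]; exact hv
  rw [show x = ι (s x) + (x - ι (s x)) by ring, map_add,
    splitDpow_add hJ hV' hsι' (by rw [hg, hsι]; exact hx) (by rw [hgv]; exact J.zero_mem),
    add_sub_cancel, splitDpow, map_sum]
  refine sum_congr rfl fun p _ => ?_
  rw [hgι _ hx, splitDpow_of_mem_ker hJ hV' hgv, hgV _ _ hv, map_mul]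

end SplitExtension

end DividedPowers

namespace CosimplicialCommRing

def edge {n : ℕ} (j : Fin (n + 1)) : Fin 2 →o Fin (n + 1) where
  toFun := ![0, j]
  monotone' a b hab := by
    fin_cases a <;> fin_cases b <;> simp_all

variable (X : CosimplicialCommRing)

def collapse (n : ℕ) : X.A n →+* X.A 0 := X.act (OrderHom.const (Fin (n + 1)) (0 : Fin 1))

def vertex (n : ℕ) (j : Fin (n + 1)) : X.A 0 →+* X.A n := X.act (OrderHom.const (Fin 1) j)

theorem face0_eq : X.face0 = X.vertex 1 0 := rfl

theorem face1_eq : X.face1 = X.vertex 1 1 := rfl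

theorem act_act {m n l : ℕ} (f : Fin (m + 1) →o Fin (n + 1)) (g : Fin (n + 1) →o Fin (l + 1))
    (x : X.A m) : X.act g (X.act f x) = X.act (g.comp f) x :=
  RingHom.congr_fun (X.act_comp f g) x

theorem act_fin_one (f : Fin 1 →o Fin 1) (x : X.A 0) : X.act f x = x := by
  rw [show f = OrderHom.id from OrderHom.ext _ _ (funext fun _ => Subsingleton.elim _ _), X.act_id]
  rfl

theorem collapse_act {m n : ℕ} (g : Fin (m + 1) →o Fin (n + 1)) (x : X.A m) :
    X.collapse n (X.act g x) = X.collapse m x := by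
  rw [collapse, collapse, act_act]
  rfl

theorem act_vertex {m n : ℕ} (g : Fin (m + 1) →o Fin (n + 1)) (j : Fin (m + 1)) (a : X.A 0) :
    X.act g (X.vertex m j a) = X.vertex n (g j) a := by
  rw [vertex, act_act]
  rfl

theorem collapse_vertex (n : ℕ) (j : Fin (n + 1)) (a : X.A 0) :
    X.collapse n (X.vertex n j a) = a := by
  rw [collapse, vertex, act_act, act_fin_one]

theorem collapse_zero (x : X.A 0) : X.collapse 0 x = x := X.act_fin_one _ x

theorem vertex_zero (j : Fin 1) (a : X.A 0) : X.vertex 0 j a = a := X.act_fin_one _ a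

theorem mem_V {n : ℕ} {x : X.A n} : x ∈ X.V n ↔ X.collapse n x = 0 := RingHom.mem_ker

theorem mem_Jext {J : Ideal (X.A 0)} {n : ℕ} {x : X.A n} :
    x ∈ X.Jext J n ↔ X.collapse n x ∈ J := by
  constructor
  · refine fun hx => (sup_le ?_ fun v hv => ?_ : X.Jext J n ≤ J.comap (X.collapse n)) hx
    · rw [Ideal.span_le]
      rintro _ ⟨f, hf, rfl⟩
      show X.collapse n (X.vertex n 0 f) ∈ J
      rw [collapse_vertex]
      exact hf
    · show X.collapse n v ∈ J
      rw [X.mem_V.mp hv]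
      exact J.zero_mem
  · intro hx
    rw [show x = X.vertex n 0 (X.collapse n x) + (x - X.vertex n 0 (X.collapse n x)) by ring]
    exact Ideal.add_mem _ (Ideal.mem_sup_left (Ideal.subset_span ⟨_, hx, rfl⟩))
      (Ideal.mem_sup_right (X.mem_V.mpr (by rw [map_sub, collapse_vertex, sub_self])))

theorem act_mem_Jext {J : Ideal (X.A 0)} {m n : ℕ} (g : Fin (m + 1) →o Fin (n + 1)) {x : X.A m}
    (hx : x ∈ X.Jext J m) : X.act g x ∈ X.Jext J n := by
  rw [mem_Jext, collapse_act]
  exact X.mem_Jext.mp hx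

theorem diff_mem_V (f : X.A 0) : X.diff f ∈ X.V 1 := by
  rw [mem_V, diff, map_sub, face0_eq, face1_eq, collapse_vertex, collapse_vertex, sub_self]

theorem diff_mem_normalized (f : X.A 0) : X.diff f ∈ X.normalized 1 := by
  intro k hk g _
  obtain rfl : k = 0 := by omega
  rw [show g = OrderHom.const _ 0 from OrderHom.ext _ _ (funext fun _ => Fin.fin_one_eq_zero _)]
  exact X.mem_V.mp (X.diff_mem_V f)

variable {X} (J : Ideal (X.A 0)) (γJ : DividedPowers J) (γV : ∀ n, DividedPowers (X.V n))

def jextDP (n : ℕ) : DividedPowers (X.Jext J n) :=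
  DividedPowers.splitExt γJ (γV n) (X.collapse_vertex n 0) fun _ => X.mem_Jext

theorem jextDP_dpow_vertex_zero (n k : ℕ) (f : X.A 0) :
    (X.jextDP J γJ γV n).dpow k (X.vertex n 0 f) = X.vertex n 0 (γJ.dpow k f) :=
  DividedPowers.splitDpow_ι γJ (γV n) (X.collapse_vertex n 0) f k

theorem jextDP_dpow_of_mem_V {n : ℕ} {v : X.A n} (hv : v ∈ X.V n) (k : ℕ) :
    (X.jextDP J γJ γV n).dpow k v = (γV n).dpow k v :=
  DividedPowers.splitDpow_of_mem_ker γJ (γV n) hv k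

theorem jextDP_zero_dpow (k : ℕ) (x : X.A 0) : (X.jextDP J γJ γV 0).dpow k x = γJ.dpow k x := by
  simpa only [vertex_zero] using X.jextDP_dpow_vertex_zero J γJ γV 0 k x

variable {J γJ}

theorem dpow_face1_eq (γ1 : DividedPowers (X.Jext J 1)) (γV1 : DividedPowers (X.V 1))
    (hnorm : ∀ c ∈ X.normalized 1, ∀ k, 1 < k → γV1.dpow k c = 0) {f : X.A 0} (hf : f ∈ J)
    (h0 : ∀ a, γ1.dpow a (X.face0 f) = X.face0 (γJ.dpow a f))
    (hV : ∀ b, γ1.dpow b (X.diff f) = γV1.dpow b (X.diff f)) (k : ℕ) :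
    γ1.dpow (k + 1) (X.face1 f) =
      X.face0 (γJ.dpow (k + 1) f) + X.face0 (γJ.dpow k f) * X.diff f := by
  have hf0 : X.face0 f ∈ X.Jext J 1 := X.mem_Jext.mpr (by rwa [face0_eq, collapse_vertex])
  have hd : X.diff f ∈ X.Jext J 1 :=
    X.mem_Jext.mpr (by rw [X.mem_V.mp (X.diff_mem_V f)]; exact J.zero_mem)
  rw [show X.face1 f = X.face0 f + X.diff f by rw [diff]; ring, γ1.dpow_add hf0 hd]
  simp only [h0, hV]
  exact γV1.sum_mul_dpow_eq_of_dpow_eq_zero (X.diff_mem_V f)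
    (hnorm _ (X.diff_mem_normalized f)) (fun a => X.face0 (γJ.dpow a f)) k

theorem dpow_face1_eq_iff (γ1 : DividedPowers (X.Jext J 1)) (γV1 : DividedPowers (X.V 1))
    (hnorm : ∀ c ∈ X.normalized 1, ∀ k, 1 < k → γV1.dpow k c = 0) {f : X.A 0} (hf : f ∈ J)
    (h0 : ∀ a, γ1.dpow a (X.face0 f) = X.face0 (γJ.dpow a f))
    (hV : ∀ b, γ1.dpow b (X.diff f) = γV1.dpow b (X.diff f)) (k : ℕ) :
    γ1.dpow (k + 1) (X.face1 f) = X.face1 (γJ.dpow (k + 1) f) ↔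
      X.diff (γJ.dpow (k + 1) f) = X.face0 (γJ.dpow k f) * X.diff f := by
  rw [X.dpow_face1_eq γ1 γV1 hnorm hf h0 hV, diff, diff, sub_eq_iff_eq_add', eq_comm]

theorem jextDP_dpow_face1 (hnorm : ∀ c ∈ X.normalized 1, ∀ k, 1 < k → (γV 1).dpow k c = 0)
    (hd : ∀ f ∈ J, ∀ n : ℕ, X.diff (γJ.dpow (n + 1) f) = X.face0 (γJ.dpow n f) * X.diff f)
    {f : X.A 0} (hf : f ∈ J) (k : ℕ) :
    (X.jextDP J γJ γV 1).dpow k (X.face1 f) = X.face1 (γJ.dpow k f) := by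
  cases k with
  | zero =>
    rw [DividedPowers.dpow_zero _ (X.mem_Jext.mpr (by rwa [face1_eq, collapse_vertex])),
      γJ.dpow_zero hf, map_one]
  | succ k =>
    exact (X.dpow_face1_eq_iff _ (γV 1) hnorm hf (X.jextDP_dpow_vertex_zero J γJ γV 1 · f)
      (X.jextDP_dpow_of_mem_V J γJ γV (X.diff_mem_V f)) k).mpr (hd f hf k)

variable (hγV_act : ∀ {m n : ℕ} (g : Fin (m + 1) →o Fin (n + 1)), ∀ k, ∀ x ∈ X.V m,
  (γV n).dpow k (X.act g x) = X.act g ((γV m).dpow k x))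
include hγV_act

theorem jextDP_act_of_dpow_vertex {m n : ℕ} (g : Fin (m + 1) →o Fin (n + 1))
    (hvert : ∀ f ∈ J, ∀ k, (X.jextDP J γJ γV n).dpow k (X.vertex n (g 0) f) =
      X.vertex n (g 0) (γJ.dpow k f))
    {x : X.A m} (hx : x ∈ X.Jext J m) (k : ℕ) :
    (X.jextDP J γJ γV n).dpow k (X.act g x) = X.act g ((X.jextDP J γJ γV m).dpow k x) :=
  DividedPowers.splitDpow_map γJ (γV m) (X.collapse_vertex m 0) (X.collapse_vertex n 0) (γV n)
    (X.act g) (X.collapse_act g) (hγV_act g)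
    (fun f hf k => by rw [act_vertex, act_vertex]; exact hvert f hf k) (X.mem_Jext.mp hx) k

theorem jextDP_dpow_vertex (hnorm : ∀ c ∈ X.normalized 1, ∀ k, 1 < k → (γV 1).dpow k c = 0)
    (hd : ∀ f ∈ J, ∀ n : ℕ, X.diff (γJ.dpow (n + 1) f) = X.face0 (γJ.dpow n f) * X.diff f)
    {n : ℕ} (j : Fin (n + 1)) {f : X.A 0} (hf : f ∈ J) (k : ℕ) :
    (X.jextDP J γJ γV n).dpow k (X.vertex n j f) = X.vertex n j (γJ.dpow k f) := by
  have hface1 : X.face1 f ∈ X.Jext J 1 := X.mem_Jext.mpr (by rwa [face1_eq, collapse_vertex])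
  have := X.jextDP_act_of_dpow_vertex γV hγV_act (edge j)
    (fun f _ k => X.jextDP_dpow_vertex_zero J γJ γV n k f) hface1 k
  rwa [X.jextDP_dpow_face1 γV hnorm hd hf, face1_eq, act_vertex, act_vertex] at this

theorem jextDP_act (hnorm : ∀ c ∈ X.normalized 1, ∀ k, 1 < k → (γV 1).dpow k c = 0)
    (hd : ∀ f ∈ J, ∀ n : ℕ, X.diff (γJ.dpow (n + 1) f) = X.face0 (γJ.dpow n f) * X.diff f)
    {m n : ℕ} (g : Fin (m + 1) →o Fin (n + 1)) {x : X.A m} (hx : x ∈ X.Jext J m) (k : ℕ) :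
    (X.jextDP J γJ γV n).dpow k (X.act g x) = X.act g ((X.jextDP J γJ γV m).dpow k x) :=
  X.jextDP_act_of_dpow_vertex γV hγV_act g
    (fun _ hf k => X.jextDP_dpow_vertex γV hγV_act hnorm hd (g 0) hf k) hx k

end CosimplicialCommRing

theorem pd_compatibility_iff_d_dpow_general
    (X : CosimplicialCommRing)
    -- the canonical pd structure on `V*` (STATEMENT 7)
    (γV : ∀ n, DividedPowers (X.V n))
    (hγV_maps : ∀ {m n : ℕ} (f : Fin (m + 1) →o Fin (n + 1)),
      (∀ x ∈ X.V m, X.act f x ∈ X.V n) ∧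
      (∀ (k : ℕ), ∀ x ∈ X.V m, (γV n).dpow k (X.act f x) = X.act f ((γV m).dpow k x)))
    (hγV_norm : ∀ m : ℕ, 0 < m → ∀ c ∈ X.normalized m, ∀ k : ℕ, 1 < k →
      (γV m).dpow k c = 0)
    -- a pd ideal in `A⁰`
    (J : Ideal (X.A 0)) (γJ : DividedPowers J) :
    -- compatibility: a common pd extension to the cosimplicial ideal generated by `J`
    (∃ γ' : ∀ n, DividedPowers (X.Jext J n),
      (∀ {m n : ℕ} (f : Fin (m + 1) →o Fin (n + 1)),
        (∀ x ∈ X.Jext J m, X.act f x ∈ X.Jext J n) ∧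
        (∀ (k : ℕ), ∀ x ∈ X.Jext J m,
          (γ' n).dpow k (X.act f x) = X.act f ((γ' m).dpow k x))) ∧
      (∀ (k : ℕ), ∀ x ∈ J, (γ' 0).dpow k x = γJ.dpow k x) ∧
      (∀ (n k : ℕ), ∀ v ∈ X.V n, (γ' n).dpow k v = (γV n).dpow k v))
    ↔
    -- the differential condition `d(f^{[n]}) = f^{[n-1]} d f` for `f ∈ J`, `n > 0`
    (∀ f ∈ J, ∀ n : ℕ,
      X.diff (γJ.dpow (n + 1) f) = X.face0 (γJ.dpow n f) * X.diff f) := by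
  have hnorm := hγV_norm 1 one_pos
  have hγV_act {m n : ℕ} (g : Fin (m + 1) →o Fin (n + 1)) := (hγV_maps g).2
  constructor
  · rintro ⟨γ', hγ'_act, hγ'_J, hγ'_V⟩ f hf k
    have hf0 : f ∈ X.Jext J 0 := X.mem_Jext.mpr (by rwa [X.collapse_zero])
    have hvertex (i : Fin 2) (a : ℕ) :
        (γ' 1).dpow a (X.vertex 1 i f) = X.vertex 1 i (γJ.dpow a f) := by
      rw [← hγ'_J a f hf]
      exact (hγ'_act _).2 a f hf0
    rw [← X.dpow_face1_eq_iff (γ' 1) (γV 1) hnorm hf (hvertex 0)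
      (fun b => hγ'_V 1 b _ (X.diff_mem_V f))]
    exact hvertex 1 (k + 1)
  · intro hd
    exact ⟨X.jextDP J γJ γV, fun g => ⟨fun _ => X.act_mem_Jext g,
      fun k x hx => X.jextDP_act γV hγV_act hnorm hd g hx k⟩,
      fun k x _ => X.jextDP_zero_dpow J γJ γV k x,
      fun n k v hv => X.jextDP_dpow_of_mem_V J γJ γV hv k⟩

theorem pd_compatibility_iff_d_dpow
    (X : CosimplicialCommRing)
    -- shuffle-product input (as in STATEMENT 7)
    (hshuffle : ∀ {m m' n : ℕ}
      (e : Fin (m + 1) →o Fin (n + 1)) (e' : Fin (m' + 1) →o Fin (n + 1)),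
      StrictMono e → StrictMono e' → e 0 = 0 → e' 0 = 0 →
      (∃ (a : Fin (m + 1)) (b : Fin (m' + 1)), a ≠ 0 ∧ b ≠ 0 ∧ e a = e' b) →
      ∀ c ∈ X.normalized m, ∀ c' ∈ X.normalized m',
        X.act e c * X.act e' c' = 0)
    -- the canonical pd structure on `V*` (STATEMENT 7)
    (γV : ∀ n, DividedPowers (X.V n))
    (hγV_maps : ∀ {m n : ℕ} (f : Fin (m + 1) →o Fin (n + 1)),
      (∀ x ∈ X.V m, X.act f x ∈ X.V n) ∧
      (∀ (k : ℕ), ∀ x ∈ X.V m, (γV n).dpow k (X.act f x) = X.act f ((γV m).dpow k x)))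
    (hγV_norm : ∀ m : ℕ, 0 < m → ∀ c ∈ X.normalized m, ∀ k : ℕ, 1 < k →
      (γV m).dpow k c = 0)
    -- a pd ideal in `A⁰`
    (J : Ideal (X.A 0)) (γJ : DividedPowers J) :
    -- compatibility: a common pd extension to the cosimplicial ideal generated by `J`
    (∃ γ' : ∀ n, DividedPowers (X.Jext J n),
      (∀ {m n : ℕ} (f : Fin (m + 1) →o Fin (n + 1)),
        (∀ x ∈ X.Jext J m, X.act f x ∈ X.Jext J n) ∧
        (∀ (k : ℕ), ∀ x ∈ X.Jext J m,
          (γ' n).dpow k (X.act f x) = X.act f ((γ' m).dpow k x))) ∧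
      (∀ (k : ℕ), ∀ x ∈ J, (γ' 0).dpow k x = γJ.dpow k x) ∧
      (∀ (n k : ℕ), ∀ v ∈ X.V n, (γ' n).dpow k v = (γV n).dpow k v))
    ↔
    -- the differential condition `d(f^{[n]}) = f^{[n-1]} d f` for `f ∈ J`, `n > 0`
    (∀ f ∈ J, ∀ n : ℕ,
      X.diff (γJ.dpow (n + 1) f) = X.face0 (γJ.dpow n f) * X.diff f) :=
  pd_compatibility_iff_d_dpow_general X γV hγV_maps hγV_norm J γJ
end

section
/- Let R be a p-torsion-free p-adically complete ring and let Ω• be a complex of p-torsion-free, p-adically complete flat R-modules; for each m define the subcomplex Φ^m Ω• of Ω• by Φ^m Ωⁿ := {ω ∈ p^{m+n}Ωⁿ : dω ∈ p^{m+n+1}Ωⁿ⁺¹}. Then Φ^m Ω• = p^m Φ⁰Ω• for m ≥ 0, and the quotient gr⁰_Φ Ω• has an acyclic subcomplex generated by the images of p^{i+1}Ωⁱ, with quotient g̅r⁰_Φ Ω• such that multiplication by p^{-i} gives an isomorphism g̅r⁰_Φ Ωⁱ ≅ Hⁱ(Ω•/pΩ•). -/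
/-!
STATEMENT 19 (the key local lemma of the Berthelot–Ogus/Hyodo–Kato nondegeneracy
argument; Dwork's trick).  Let `R` be a `p`-torsion-free, `p`-adically complete
commutative ring and `Ω•` a cochain complex of `p`-torsion-free, `p`-adically complete,
flat `R`-modules.  Let `Φ^m Ωⁿ := {ω ∈ p^{m+n}Ωⁿ : dω ∈ p^{m+n+1}Ωⁿ⁺¹}` be the shifted
(décalée) `p`-adic filtration (for `m ≥ 0`).  Then:
(1) `Φ^m Ω• = p^m Φ⁰Ω•` for `m ≥ 0`;
(2) the subcomplex of `gr⁰_Φ Ω•` generated by the images of `p^{i+1}Ωⁱ` (i.e. by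
    `Uⁱ = p^{i+1}Ωⁱ + pⁱ·d(Ω^{i-1})`) is acyclic;
(3) multiplication by `p^{-i}` identifies the `i`-th term of the quotient
    `g̅r⁰_Φ Ω•` with `Hⁱ(Ω•/pΩ•)`: explicitly, for `ω ∈ Ωⁱ` with `dω ∈ pΩ^{i+1}` one has
    `pⁱω ∈ Φ⁰Ωⁱ`; the induced assignment `[ω] ↦ [pⁱω]` is surjective onto
    `Φ⁰Ωⁱ/(Φ¹Ωⁱ + Uⁱ)` and has precisely `pΩⁱ + d(Ω^{i-1})` as its kernel.
-/

section

variable (R : Type) [CommRing R] (p : ℕ)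
  (Ω : ℕ → Type) [∀ i, AddCommGroup (Ω i)] [∀ i, Module R (Ω i)]
  (d : ∀ i : ℕ, Ω i →ₗ[R] Ω (i + 1))

/-- The submodule `p^s Ωⁿ`. -/
noncomputable def pMul (s n : ℕ) : Submodule R (Ω n) :=
  LinearMap.range (((p : R) ^ s) • (LinearMap.id : Ω n →ₗ[R] Ω n))

/-- The shifted (décalée) `p`-adic filtration:
`Φ^m Ωⁿ = {ω ∈ p^{m+n}Ωⁿ : dω ∈ p^{m+n+1}Ωⁿ⁺¹}` (`m ≥ 0`). -/
noncomputable def PhiFil (m n : ℕ) : Submodule R (Ω n) :=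
  pMul R p Ω (m + n) n ⊓ Submodule.comap (d n) (pMul R p Ω (m + n + 1) (n + 1))

/-- The boundaries subcomplex: `B⁰ = 0`, `Bⁿ⁺¹ = d(Ωⁿ)`. -/
noncomputable def Bdry : ∀ n : ℕ, Submodule R (Ω n)
  | 0 => ⊥
  | (n + 1) => LinearMap.range (d n)

/-- `Uⁿ = p^{n+1}Ωⁿ + pⁿ·(boundaries)`: the terms of the subcomplex of `gr⁰_Φ`
generated by the images of `p^{i+1}Ωⁱ`. -/
noncomputable def Usub (n : ℕ) : Submodule R (Ω n) :=
  pMul R p Ω (n + 1) n ⊔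
    Submodule.map (((p : R) ^ n) • (LinearMap.id : Ω n →ₗ[R] Ω n)) (Bdry R Ω d n)

end


section AuxLemmas

variable {R : Type} [CommRing R] {p : ℕ}
  {Ω : ℕ → Type} [∀ i, AddCommGroup (Ω i)] [∀ i, Module R (Ω i)]

lemma mem_pMul {s n : ℕ} {x : Ω n} :
    x ∈ pMul R p Ω s n ↔ ∃ y : Ω n, (p : R) ^ s • y = x := by
  simp [pMul, LinearMap.mem_range]

lemma pow_smul_eq_zero (hΩtf : ∀ i (x : Ω i), (p : R) • x = 0 → x = 0)
    {n : ℕ} (s : ℕ) {x : Ω n} (h : (p : R) ^ s • x = 0) : x = 0 := by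
  induction s with
  | zero => simpa using h
  | succ s ih =>
    apply ih
    apply hΩtf
    rw [smul_smul, ← pow_succ']
    exact h

lemma pow_smul_cancel (hΩtf : ∀ i (x : Ω i), (p : R) • x = 0 → x = 0)
    {n : ℕ} (s : ℕ) {x y : Ω n} (h : (p : R) ^ s • x = (p : R) ^ s • y) : x = y := by
  have : (p : R) ^ s • (x - y) = 0 := by rw [smul_sub, h, sub_self]
  exact sub_eq_zero.mp (pow_smul_eq_zero hΩtf s this)

end AuxLemmas

theorem decale_p_adic_filtration
    {R : Type} [CommRing R] (p : ℕ) (hp : p.Prime)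
    (hRtf : ∀ r : R, (p : R) * r = 0 → r = 0)
    [IsAdicComplete (Ideal.span {(p : R)}) R]
    (Ω : ℕ → Type) [∀ i, AddCommGroup (Ω i)] [∀ i, Module R (Ω i)]
    [∀ i, Module.Flat R (Ω i)]
    [∀ i, IsAdicComplete (Ideal.span {(p : R)}) (Ω i)]
    (hΩtf : ∀ i (x : Ω i), (p : R) • x = 0 → x = 0)
    (d : ∀ i : ℕ, Ω i →ₗ[R] Ω (i + 1))
    (hdd : ∀ i (x : Ω i), d (i + 1) (d i x) = 0) :
    -- (1) `Φ^m = p^m Φ⁰` for `m ≥ 0`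
    (∀ m n : ℕ, PhiFil R p Ω d m n =
      Submodule.map (((p : R) ^ m) • (LinearMap.id : Ω n →ₗ[R] Ω n)) (PhiFil R p Ω d 0 n)) ∧
    -- (2) the subcomplex of `gr⁰` generated by the images of `p^{i+1}Ωⁱ` is acyclic
    ((∀ x ∈ Usub R p Ω d 0, d 0 x ∈ PhiFil R p Ω d 1 1 → x ∈ PhiFil R p Ω d 1 0) ∧
      (∀ n : ℕ, ∀ x ∈ Usub R p Ω d (n + 1), d (n + 1) x ∈ PhiFil R p Ω d 1 (n + 2) →
        ∃ y ∈ Usub R p Ω d n, x - d n y ∈ PhiFil R p Ω d 1 (n + 1))) ∧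
    -- (3) division by `pⁱ` identifies `g̅r⁰_Φ Ωⁱ` with `Hⁱ(Ω•/p)`
    ((∀ i (ω : Ω i), d i ω ∈ pMul R p Ω 1 (i + 1) → ((p : R) ^ i • ω) ∈ PhiFil R p Ω d 0 i) ∧
      (∀ i, ∀ x ∈ PhiFil R p Ω d 0 i, ∃ ω : Ω i, d i ω ∈ pMul R p Ω 1 (i + 1) ∧
        x - (p : R) ^ i • ω ∈ PhiFil R p Ω d 1 i ⊔ Usub R p Ω d i) ∧
      (∀ i (ω : Ω i), d i ω ∈ pMul R p Ω 1 (i + 1) →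
        ((p : R) ^ i • ω ∈ PhiFil R p Ω d 1 i ⊔ Usub R p Ω d i ↔
          ω ∈ pMul R p Ω 1 i ⊔ Bdry R Ω d i))) := by
  refine ⟨?_, ⟨?_, ?_⟩, ?_, ?_, ?_⟩
  · -- (1)
    intro m n
    ext x
    simp only [PhiFil, Submodule.mem_inf, Submodule.mem_comap, Submodule.mem_map,
      LinearMap.smul_apply, LinearMap.id_coe, id_eq, mem_pMul, Nat.zero_add]
    constructor
    · rintro ⟨⟨y, hy⟩, ⟨z, hz⟩⟩
      have hdy : d n y = (p : R) • z := by
        apply pow_smul_cancel hΩtf (m + n)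
        rw [← map_smul, hy, ← hz, smul_smul, ← pow_succ]
      refine ⟨(p : R) ^ n • y, ⟨⟨y, rfl⟩, ⟨z, ?_⟩⟩, ?_⟩
      · rw [map_smul, hdy, smul_smul, ← pow_succ]
      · rw [smul_smul, ← pow_add, hy]
    · rintro ⟨w, ⟨⟨y, hy⟩, ⟨z, hz⟩⟩, hw⟩
      constructor
      · exact ⟨y, by rw [pow_add, mul_smul, hy, hw]⟩
      · refine ⟨z, ?_⟩
        rw [← hw, map_smul, ← hz, smul_smul, ← pow_add, add_assoc]
  · -- (2), degree 0
    intro x hx hdx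
    have hx' : x ∈ pMul R p Ω 1 0 := by
      simpa [Usub, Bdry, Submodule.map_bot] using hx
    exact ⟨hx', hdx.1⟩
  · -- (2), degree n+1
    intro n x hx hdx
    rw [Usub, Submodule.mem_sup] at hx
    obtain ⟨u, hu, v, hv, hx⟩ := hx
    rw [mem_pMul] at hu
    obtain ⟨a, ha⟩ := hu
    rw [Submodule.mem_map] at hv
    obtain ⟨b0, hb0, hv⟩ := hv
    rw [show Bdry R Ω d (n + 1) = LinearMap.range (d n) from rfl, LinearMap.mem_range] at hb0
    obtain ⟨b, hb⟩ := hb0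
    simp only [LinearMap.smul_apply, LinearMap.id_coe, id_eq] at hv
    -- x = p^{n+2} • a + p^{n+1} • d n b
    have hxe : x = (p : R) ^ (n + 2) • a + (p : R) ^ (n + 1) • d n b := by
      rw [← ha, ← hv, ← hb] at hx
      exact hx.symm
    refine ⟨(p : R) ^ (n + 1) • b, ?_, ?_⟩
    · exact Submodule.mem_sup_left (mem_pMul.mpr ⟨b, rfl⟩)
    · have hsub : x - d n ((p : R) ^ (n + 1) • b) = (p : R) ^ (n + 2) • a := by
        rw [hxe, map_smul]; abel
      rw [PhiFil, Submodule.mem_inf] at hdx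
      obtain ⟨hdx1, -⟩ := hdx
      rw [mem_pMul] at hdx1
      obtain ⟨z, hz⟩ := hdx1
      have hda : d (n + 1) a = (p : R) • z := by
        apply pow_smul_cancel hΩtf (n + 2)
        have : d (n + 1) x = (p : R) ^ (n + 2) • d (n + 1) a := by
          rw [hxe, map_add, map_smul, map_smul, hdd n b, smul_zero, add_zero]
        rw [← this, ← hz, smul_smul, ← pow_succ]
        ring_nf
      rw [PhiFil, Submodule.mem_inf]
      constructor
      · rw [hsub, mem_pMul]
        exact ⟨a, by rw [show 1 + (n + 1) = n + 2 from by omega]⟩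
      · rw [Submodule.mem_comap, hsub, mem_pMul, map_smul, hda]
        exact ⟨z, by rw [smul_smul, ← pow_succ, show 1 + (n + 1) + 1 = n + 2 + 1 from by omega]⟩
  · -- (3a)
    intro i ω h
    rw [mem_pMul] at h
    obtain ⟨z, hz⟩ := h
    rw [PhiFil, Submodule.mem_inf]
    refine ⟨mem_pMul.mpr ⟨ω, by norm_num⟩, ?_⟩
    rw [Submodule.mem_comap, mem_pMul, map_smul, ← hz]
    exact ⟨z, by rw [pow_one, smul_smul, ← pow_succ, show 0 + i + 1 = i + 1 from by omega]⟩
  · -- (3b)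
    intro i x hx
    rw [PhiFil, Submodule.mem_inf] at hx
    obtain ⟨h1, h2⟩ := hx
    rw [mem_pMul] at h1
    obtain ⟨ω, hω⟩ := h1
    rw [Submodule.mem_comap, mem_pMul] at h2
    obtain ⟨z, hz⟩ := h2
    have hdω : d i ω = (p : R) • z := by
      apply pow_smul_cancel hΩtf (0 + i)
      rw [← map_smul, hω, ← hz, smul_smul, ← pow_succ]
    refine ⟨ω, mem_pMul.mpr ⟨z, by rw [pow_one, hdω]⟩, ?_⟩
    have : x - (p : R) ^ i • ω = 0 := by
      rw [← hω]; norm_num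
    rw [this]
    exact Submodule.zero_mem _
  · -- (3c)
    intro i ω hdω
    constructor
    · intro h
      rw [Submodule.mem_sup] at h
      obtain ⟨u, hu, v, hv, huv⟩ := h
      rw [PhiFil, Submodule.mem_inf] at hu
      obtain ⟨hu1, -⟩ := hu
      rw [mem_pMul] at hu1
      obtain ⟨a, ha⟩ := hu1
      rw [Usub, Submodule.mem_sup] at hv
      obtain ⟨v1, hv1, v2, hv2, hv⟩ := hv
      rw [mem_pMul] at hv1
      obtain ⟨c, hc⟩ := hv1
      rw [Submodule.mem_map] at hv2
      obtain ⟨b, hb, hv2⟩ := hv2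
      simp only [LinearMap.smul_apply, LinearMap.id_coe, id_eq] at hv2
      have key : (p : R) ^ i • ω = (p : R) ^ i • ((p : R) • (a + c) + b) := by
        rw [← huv, ← ha, ← hv, ← hc, ← hv2]
        rw [smul_add, smul_add, smul_add, smul_smul, smul_smul, ← pow_succ,
          show 1 + i = i + 1 from by omega]
        abel
      have := pow_smul_cancel hΩtf i key
      rw [this, Submodule.mem_sup]
      exact ⟨(p : R) • (a + c), mem_pMul.mpr ⟨a + c, by rw [pow_one]⟩, b, hb,  rfl⟩
    · intro h
      rw [Submodule.mem_sup] at h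
      obtain ⟨u, hu, b, hb, huv⟩ := h
      rw [mem_pMul] at hu
      obtain ⟨a, ha⟩ := hu
      rw [pow_one] at ha
      apply Submodule.mem_sup_right
      rw [Usub, Submodule.mem_sup]
      refine ⟨(p : R) ^ (i + 1) • a, mem_pMul.mpr ⟨a, rfl⟩, (p : R) ^ i • b,
        Submodule.mem_map.mpr ⟨b, hb, by simp⟩, ?_⟩
      rw [← huv, ← ha, smul_add, smul_smul, ← pow_succ]
end
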